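/- arXiv:1610.01878 — 7 statements merged into one kernel-verified Lean document; each statement's English description precedes it below -/
import Mathlib

section
/- Let a > 0 be a real constant and p ≥ 0 an integer. The set of real polynomials v in two variables (t, x) of total degree at most p that satisfy the formal polynomial identity ∂²v/∂t² − a·∂²v/∂x² = 0 is an ℝ-linear subspace of the polynomial ring, and its dimension equals 2p + 1. -/
open MvPolynomial

noncomputable section TrefftzAux

def ev0 : MvPolynomial (Fin 2) ℝ →ₐ[ℝ] Polynomial ℝ :=
  aeval (fun i => if i = 0 then 0 else Polynomial.X)

lemma ev0_C (r : ℝ) : ev0 (C r) = Polynomial.C r := by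
  simp [ev0]

lemma sum_support_eq (s : Fin 2 →₀ ℕ) : ∑ i ∈ s.support, s i = s 0 + s 1 := by
  rw [Finset.sum_subset (Finset.subset_univ _)
    (fun i _ hi => Finsupp.notMem_support_iff.mp hi)]
  exact Fin.sum_univ_two s

lemma coeff_pderiv' {σ : Type*} (i : σ) (f : MvPolynomial σ ℝ) (m : σ →₀ ℕ) :
    coeff m (pderiv i f) = (m i + 1) * coeff (m + Finsupp.single i 1) f := by
  classical
  induction f using MvPolynomial.induction_on' with
  | monomial s c =>
    rw [pderiv_monomial, coeff_monomial, coeff_monomial]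
    by_cases hs : s = m + Finsupp.single i 1
    · subst hs
      have h1 : m + Finsupp.single i 1 - Finsupp.single i 1 = m := by
        ext j; simp [Finsupp.single_apply]
      rw [if_pos h1]
      simp [Finsupp.single_apply, mul_comm]
    · rw [if_neg hs]
      by_cases h0 : s i = 0
      · simp [h0]
      · have hle : Finsupp.single i 1 ≤ s := Finsupp.single_le_iff.2 (Nat.one_le_iff_ne_zero.2 h0)
        have : s - Finsupp.single i 1 ≠ m := by
          intro h
          apply hs
          rw [← h, tsub_add_cancel_of_le hle]
        simp [this]
  | add f g hf hg => simp [hf, hg, mul_add]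


lemma coeff_ev0 (v : MvPolynomial (Fin 2) ℝ) (j : ℕ) :
    (ev0 v).coeff j = coeff (Finsupp.single 1 j) v := by
  classical
  induction v using MvPolynomial.induction_on' with
  | monomial s c =>
    rw [ev0, aeval_monomial, Finsupp.prod_pow, coeff_monomial]
    rw [Fin.prod_univ_two]
    rw [show (if (0:Fin 2) = 0 then (0:Polynomial ℝ) else Polynomial.X) = 0 from rfl,
        show (if (1:Fin 2) = 0 then (0:Polynomial ℝ) else Polynomial.X) = Polynomial.X from rfl]
    by_cases h0 : s 0 = 0
    · rw [h0, pow_zero, one_mul]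
      have hC : algebraMap ℝ (Polynomial ℝ) c = Polynomial.C c := rfl
      rw [hC, Polynomial.coeff_C_mul, Polynomial.coeff_X_pow]
      by_cases hj : s = Finsupp.single 1 j
      · have : s 1 = j := by rw [hj]; simp
        simp [hj, this]
      · have hne : s 1 ≠ j := by
          intro h; apply hj
          ext k
          fin_cases k <;> simp [h0, h, Finsupp.single_apply]
        simp [hj, hne, Ne.symm hne]
    · rw [zero_pow h0]
      have : s ≠ Finsupp.single 1 j := by
        intro h; apply h0; rw [h]; simp [Finsupp.single_apply]
      simp [this]
  | add f g hf hg => simp [hf, hg]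

lemma cauchy_injective (a : ℝ) (v : MvPolynomial (Fin 2) ℝ)
    (hL : pderiv 0 (pderiv 0 v) - C a * pderiv 1 (pderiv 1 v) = 0)
    (h0 : ev0 v = 0) (h1 : ev0 (pderiv 0 v) = 0) : v = 0 := by
  have key : ∀ i j : ℕ, coeff (Finsupp.single 0 i + Finsupp.single 1 j) v = 0 := by
    intro i
    induction i using Nat.strong_induction_on with
    | _ i ih =>
      intro j
      match i with
      | 0 =>
        have := coeff_ev0 v j
        rw [h0] at this
        simpa using this.symm
      | 1 =>
        have := coeff_ev0 (pderiv 0 v) j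
        rw [h1] at this
        rw [coeff_pderiv'] at this
        have h2 : Finsupp.single (1 : Fin 2) j + Finsupp.single 0 1
            = Finsupp.single 0 1 + Finsupp.single 1 j := by abel
        simp only [Polynomial.coeff_zero, Finsupp.single_apply] at this
        rw [h2] at this
        simpa using this.symm
      | (i + 2) =>
        have hc := congrArg (coeff (Finsupp.single 0 i + Finsupp.single 1 j)) hL
        rw [coeff_sub, coeff_zero, coeff_pderiv', coeff_pderiv', coeff_C_mul,
          coeff_pderiv', coeff_pderiv'] at hc
        set m := Finsupp.single (0 : Fin 2) i + Finsupp.single 1 j with hm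
        have e0 : m + Finsupp.single 0 1 + Finsupp.single 0 1
            = Finsupp.single 0 (i + 2) + Finsupp.single 1 j := by
          ext k; fin_cases k <;> simp [hm, Finsupp.single_apply]
        have e1 : m + Finsupp.single 1 1 + Finsupp.single 1 1
            = Finsupp.single 0 i + Finsupp.single 1 (j + 2) := by
          ext k; fin_cases k <;> simp [hm, Finsupp.single_apply]
        rw [e0, e1, ih i (by omega) (j + 2)] at hc
        have hm0 : m 0 = i := by simp [hm, Finsupp.single_apply]
        have hm0' : ((m + Finsupp.single 0 1 : Fin 2 →₀ ℕ)) 0 = i + 1 := by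
          simp [hm, Finsupp.single_apply]
        rw [hm0, hm0'] at hc
        simp only [mul_zero, sub_zero] at hc
        push_cast at hc
        rcases mul_eq_zero.1 hc with hc | hc
        · exact absurd hc (by positivity)
        · rcases mul_eq_zero.1 hc with hc | hc
          · exact absurd hc (by positivity)
          · exact hc
  have hall : ∀ m : Fin 2 →₀ ℕ, coeff m v = 0 := by
    intro m
    have hm : m = Finsupp.single 0 (m 0) + Finsupp.single 1 (m 1) := by
      ext k; fin_cases k <;> simp [Finsupp.single_apply]
    rw [hm]; exact key _ _
  ext m; simpa using hall m


-- chain rule for pderiv through Polynomial.aeval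
lemma pderiv_polyaeval (i : Fin 2) (q : MvPolynomial (Fin 2) ℝ) (h : Polynomial ℝ) :
    pderiv i (Polynomial.aeval q h)
      = Polynomial.aeval q (Polynomial.derivative h) * pderiv i q := by
  rw [Derivation.comp_aeval_eq, smul_eq_mul]

-- total degree bound for substitution of degree ≤ 1 polys
lemma totalDegree_polyaeval_le (q : MvPolynomial (Fin 2) ℝ) (hq : q.totalDegree ≤ 1)
    (h : Polynomial ℝ) : (Polynomial.aeval q h).totalDegree ≤ h.natDegree := by
  rw [Polynomial.aeval_eq_sum_range]
  refine (totalDegree_finset_sum _ _).trans ?_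
  refine Finset.sup_le fun i hi => ?_
  refine (totalDegree_smul_le _ _).trans ?_
  refine (totalDegree_pow _ _).trans ?_
  have : i ≤ h.natDegree := by
    simp only [Finset.mem_range] at hi; omega
  calc i * q.totalDegree ≤ i * 1 := Nat.mul_le_mul_left _ hq
    _ ≤ h.natDegree := by omega

def qp (c : ℝ) : MvPolynomial (Fin 2) ℝ := X 1 + C c * X 0
def qm (c : ℝ) : MvPolynomial (Fin 2) ℝ := X 1 - C c * X 0

lemma totalDegree_qp (c : ℝ) : (qp c).totalDegree ≤ 1 := by
  refine (totalDegree_add _ _).trans ?_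
  simp only [max_le_iff, totalDegree_X]
  refine ⟨le_rfl, (totalDegree_mul _ _).trans ?_⟩
  simp [totalDegree_C, totalDegree_X]

lemma totalDegree_qm (c : ℝ) : (qm c).totalDegree ≤ 1 := by
  rw [qm, sub_eq_add_neg]
  refine (totalDegree_add _ _).trans ?_
  simp only [max_le_iff, totalDegree_X]
  constructor
  · exact le_rfl
  · rw [← neg_mul, ← map_neg]
    refine (totalDegree_mul _ _).trans ?_
    simp [totalDegree_C, totalDegree_X]

lemma pderiv0_qp (c : ℝ) : pderiv 0 (qp c) = C c := by
  simp [qp, pderiv_X_of_ne (show (1:Fin 2) ≠ 0 by decide)]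
lemma pderiv1_qp (c : ℝ) : pderiv 1 (qp c) = 1 := by
  simp [qp, pderiv_X_of_ne (show (0:Fin 2) ≠ 1 by decide)]
lemma pderiv0_qm (c : ℝ) : pderiv 0 (qm c) = -C c := by
  simp [qm, pderiv_X_of_ne (show (1:Fin 2) ≠ 0 by decide)]
lemma pderiv1_qm (c : ℝ) : pderiv 1 (qm c) = 1 := by
  simp [qm, pderiv_X_of_ne (show (0:Fin 2) ≠ 1 by decide)]

lemma wave_qp (a c : ℝ) (hc : c ^ 2 = a) (h : Polynomial ℝ) :
    pderiv 0 (pderiv 0 (Polynomial.aeval (qp c) h))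
      - C a * pderiv 1 (pderiv 1 (Polynomial.aeval (qp c) h)) = 0 := by
  rw [pderiv_polyaeval, pderiv_polyaeval, Derivation.leibniz, pderiv0_qp,
    pderiv_polyaeval, Derivation.leibniz, pderiv1_qp, pderiv_polyaeval]
  simp only [pderiv0_qp, pderiv1_qp, pderiv_C, smul_eq_mul, mul_zero, mul_one, zero_add, add_zero]
  rw [← hc]
  simp only [pderiv_one, mul_zero, sub_zero]
  rw [show (C (c^2) : MvPolynomial (Fin 2) ℝ) = C c ^ 2 from map_pow C c 2]
  ring

lemma wave_qm (a c : ℝ) (hc : c ^ 2 = a) (h : Polynomial ℝ) :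
    pderiv 0 (pderiv 0 (Polynomial.aeval (qm c) h))
      - C a * pderiv 1 (pderiv 1 (Polynomial.aeval (qm c) h)) = 0 := by
  rw [pderiv_polyaeval, pderiv_polyaeval, Derivation.leibniz, pderiv0_qm,
    pderiv_polyaeval, Derivation.leibniz, pderiv1_qm, pderiv_polyaeval]
  simp only [pderiv0_qm, pderiv1_qm, smul_eq_mul, mul_zero, mul_one, zero_add, add_zero]
  have : pderiv (0 : Fin 2) (-C c : MvPolynomial (Fin 2) ℝ) = 0 := by
    rw [map_neg, pderiv_C, neg_zero]
  rw [this, ← hc]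
  simp only [pderiv_one, mul_zero, sub_zero, neg_neg, mul_one, zero_mul, neg_zero, zero_add]
  rw [show (C (c^2) : MvPolynomial (Fin 2) ℝ) = C c ^ 2 from map_pow C c 2]
  ring

lemma ev0_qp (c : ℝ) : ev0 (qp c) = Polynomial.X := by
  simp [ev0, qp]
lemma ev0_qm (c : ℝ) : ev0 (qm c) = Polynomial.X := by
  simp [ev0, qm]

lemma ev0_polyaeval_qp (c : ℝ) (h : Polynomial ℝ) :
    ev0 (Polynomial.aeval (qp c) h) = h := by
  rw [← Polynomial.aeval_algHom_apply, ev0_qp, Polynomial.aeval_X_left_apply]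
lemma ev0_polyaeval_qm (c : ℝ) (h : Polynomial ℝ) :
    ev0 (Polynomial.aeval (qm c) h) = h := by
  rw [← Polynomial.aeval_algHom_apply, ev0_qm, Polynomial.aeval_X_left_apply]

-- antiderivative
def antideriv (g : Polynomial ℝ) : Polynomial ℝ :=
  g.sum fun n r => Polynomial.C (r / (n + 1)) * Polynomial.X ^ (n + 1)

lemma derivative_antideriv (g : Polynomial ℝ) :
    Polynomial.derivative (antideriv g) = g := by
  rw [antideriv, Polynomial.sum, map_sum]
  conv_rhs => rw [← Polynomial.sum_C_mul_X_pow_eq g, Polynomial.sum]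
  refine Finset.sum_congr rfl fun n _ => ?_
  rw [Polynomial.derivative_C_mul_X_pow]
  have hne : ((n:ℝ) + 1) ≠ 0 := by positivity
  simp only [Nat.add_sub_cancel]
  congr 1
  push_cast
  field_simp

lemma natDegree_antideriv (g : Polynomial ℝ) : (antideriv g).natDegree ≤ g.natDegree + 1 := by
  rw [antideriv, Polynomial.sum]
  refine Polynomial.natDegree_sum_le_of_forall_le _ _ fun n hn => ?_
  refine (Polynomial.natDegree_C_mul_le _ _).trans ?_
  rw [Polynomial.natDegree_X_pow]
  have := Polynomial.le_natDegree_of_mem_supp n hn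
  omega

end TrefftzAux

/-- **Dimension of the polynomial Trefftz space, case d = 1.**
The set of real polynomials `v` in two variables `t = X 0`, `x = X 1` of total
degree at most `p` satisfying the formal wave equation
`∂²v/∂t² - a·∂²v/∂x² = 0` is an ℝ-linear subspace of dimension `2p + 1`. -/
theorem trefftz_dim_d1 (a : ℝ) (ha : 0 < a) (p : ℕ) :
    ∃ S : Submodule ℝ (MvPolynomial (Fin 2) ℝ),
      (S : Set (MvPolynomial (Fin 2) ℝ)) =
        {v : MvPolynomial (Fin 2) ℝ | v.totalDegree ≤ p ∧
          pderiv 0 (pderiv 0 v) - C a * pderiv 1 (pderiv 1 v) = 0} ∧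
      Module.finrank ℝ S = 2 * p + 1 := by
  classical
  set c := Real.sqrt a with hcdef
  have hc2 : c ^ 2 = a := Real.sq_sqrt ha.le
  have hc0 : 0 < c := Real.sqrt_pos.2 ha
  set L : MvPolynomial (Fin 2) ℝ →ₗ[ℝ] MvPolynomial (Fin 2) ℝ :=
    ((pderiv (0 : Fin 2)).toLinearMap ∘ₗ (pderiv (0 : Fin 2)).toLinearMap)
      - a • ((pderiv (1 : Fin 2)).toLinearMap ∘ₗ (pderiv (1 : Fin 2)).toLinearMap) with hLdef
  have hL : ∀ v, L v = pderiv 0 (pderiv 0 v) - C a * pderiv 1 (pderiv 1 v) := by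
    intro v
    simp [hLdef, MvPolynomial.smul_eq_C_mul]
  set S : Submodule ℝ (MvPolynomial (Fin 2) ℝ) :=
    restrictTotalDegree (Fin 2) ℝ p ⊓ LinearMap.ker L with hSdef
  have hSmem : ∀ v, v ∈ S ↔ v.totalDegree ≤ p ∧
      pderiv 0 (pderiv 0 v) - C a * pderiv 1 (pderiv 1 v) = 0 := by
    intro v
    rw [hSdef, Submodule.mem_inf, LinearMap.mem_ker, hL v, mem_restrictTotalDegree]
  refine ⟨S, ?_, ?_⟩
  · ext v
    simpa using hSmem v
  -- degree bounds for the Cauchy data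
  have hdeg1 : ∀ v : MvPolynomial (Fin 2) ℝ, v.totalDegree ≤ p →
      ev0 v ∈ Polynomial.degreeLT ℝ (p + 1) := by
    intro v hv
    rw [Polynomial.mem_degreeLT]
    rw [Polynomial.degree_lt_iff_coeff_zero]
    intro m hm
    rw [coeff_ev0]
    apply coeff_eq_zero_of_totalDegree_lt
    rw [sum_support_eq]
    simp only [Finsupp.single_apply]
    norm_num
    omega
  have hdeg2 : ∀ v : MvPolynomial (Fin 2) ℝ, v.totalDegree ≤ p →
      ev0 (pderiv 0 v) ∈ Polynomial.degreeLT ℝ p := by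
    intro v hv
    rw [Polynomial.mem_degreeLT]
    rw [Polynomial.degree_lt_iff_coeff_zero]
    intro m hm
    rw [coeff_ev0, coeff_pderiv']
    have : coeff (Finsupp.single 1 m + Finsupp.single 0 1) v = 0 := by
      apply coeff_eq_zero_of_totalDegree_lt
      rw [sum_support_eq]
      simp only [Finsupp.coe_add, Pi.add_apply, Finsupp.single_apply]
      norm_num
      omega
    rw [this, mul_zero]
  -- the Cauchy data map
  set Φ₁ : S →ₗ[ℝ] ↥(Polynomial.degreeLT ℝ (p + 1)) :=
    LinearMap.codRestrict _ (ev0.toLinearMap ∘ₗ S.subtype)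
      (fun x => hdeg1 x.1 ((hSmem x.1).mp x.2).1) with hΦ₁
  set Φ₂ : S →ₗ[ℝ] ↥(Polynomial.degreeLT ℝ p) :=
    LinearMap.codRestrict _ (ev0.toLinearMap ∘ₗ (pderiv (0 : Fin 2)).toLinearMap ∘ₗ S.subtype)
      (fun x => hdeg2 x.1 ((hSmem x.1).mp x.2).1) with hΦ₂
  set Φ : S →ₗ[ℝ] ↥(Polynomial.degreeLT ℝ (p + 1)) × ↥(Polynomial.degreeLT ℝ p) :=
    Φ₁.prod Φ₂ with hΦ
  have hΦ₁app : ∀ x : S, (Φ₁ x : Polynomial ℝ) = ev0 x.1 := fun x => rfl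
  have hΦ₂app : ∀ x : S, (Φ₂ x : Polynomial ℝ) = ev0 (pderiv 0 x.1) := fun x => rfl
  have hinj : Function.Injective Φ := by
    intro x y hxy
    have t1 : ev0 (x : MvPolynomial (Fin 2) ℝ) = ev0 (y : MvPolynomial (Fin 2) ℝ) := by
      have := congrArg (fun z => ((z.1 : Polynomial ℝ))) hxy
      simpa only [hΦ, LinearMap.prod_apply, Function.prod, hΦ₁app] using this
    have t2 : ev0 (pderiv 0 (x : MvPolynomial (Fin 2) ℝ))
        = ev0 (pderiv 0 (y : MvPolynomial (Fin 2) ℝ)) := by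
      have := congrArg (fun z => ((z.2 : Polynomial ℝ))) hxy
      simpa only [hΦ, LinearMap.prod_apply, Function.prod, hΦ₂app] using this
    have h1 : ev0 ((x : MvPolynomial (Fin 2) ℝ) - y) = 0 := by
      rw [map_sub, t1, sub_self]
    have h2 : ev0 (pderiv 0 ((x : MvPolynomial (Fin 2) ℝ) - y)) = 0 := by
      rw [map_sub, map_sub, t2, sub_self]
    have h0 := ((hSmem _).mp (sub_mem x.2 y.2)).2
    exact Subtype.ext (sub_eq_zero.mp (cauchy_injective a _ h0 h1 h2))
  have hsurj : Function.Surjective Φ := by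
    rintro ⟨⟨f, hf⟩, ⟨g, hg⟩⟩
    set G := antideriv g with hGdef
    set v : MvPolynomial (Fin 2) ℝ :=
      (2⁻¹ : ℝ) • (Polynomial.aeval (qp c) f + Polynomial.aeval (qm c) f)
        + (2 * c)⁻¹ • (Polynomial.aeval (qp c) G - Polynomial.aeval (qm c) G) with hvdef
    have hfdeg : f.natDegree ≤ p := by
      by_cases h0 : f = 0
      · simp [h0]
      · have := (Polynomial.natDegree_lt_iff_degree_lt h0).mpr
          (by exact_mod_cast Polynomial.mem_degreeLT.mp hf)
        omega
    have hGdeg : G.natDegree ≤ p := by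
      by_cases h0 : g = 0
      · simp [hGdef, h0, antideriv]
      · have hg' := (Polynomial.natDegree_lt_iff_degree_lt h0).mpr
          (by exact_mod_cast Polynomial.mem_degreeLT.mp hg)
        have := natDegree_antideriv g
        rw [← hGdef] at this
        omega
    have hvdeg : v.totalDegree ≤ p := by
      rw [hvdef]
      refine (totalDegree_add _ _).trans (max_le ?_ ?_)
      · refine (totalDegree_smul_le _ _).trans ?_
        refine (totalDegree_add _ _).trans (max_le ?_ ?_)
        · exact (totalDegree_polyaeval_le _ (totalDegree_qp c) f).trans hfdeg
        · exact (totalDegree_polyaeval_le _ (totalDegree_qm c) f).trans hfdeg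
      · refine (totalDegree_smul_le _ _).trans ?_
        rw [sub_eq_add_neg]
        refine (totalDegree_add _ _).trans (max_le ?_ ?_)
        · exact (totalDegree_polyaeval_le _ (totalDegree_qp c) G).trans hGdeg
        · rw [show -Polynomial.aeval (qm c) G = (-1 : ℝ) • Polynomial.aeval (qm c) G by
            rw [neg_one_smul]]
          exact (totalDegree_smul_le _ _).trans
            ((totalDegree_polyaeval_le _ (totalDegree_qm c) G).trans hGdeg)
    have hvker : pderiv 0 (pderiv 0 v) - C a * pderiv 1 (pderiv 1 v) = 0 := by
      rw [← hL]
      rw [hvdef, map_add, map_smul, map_smul, map_add, map_sub]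
      rw [hL, hL, hL, hL]
      rw [wave_qp a c hc2, wave_qm a c hc2, wave_qp a c hc2, wave_qm a c hc2]
      simp
    have hvS : v ∈ S := (hSmem v).mpr ⟨hvdeg, hvker⟩
    have e1 : ev0 v = f := by
      rw [hvdef, map_add, map_smul, map_smul, map_add, map_sub,
        ev0_polyaeval_qp, ev0_polyaeval_qm, ev0_polyaeval_qp, ev0_polyaeval_qm]
      rw [sub_self, smul_zero, add_zero, ← two_smul ℝ f, smul_smul]
      norm_num
    have hdv : pderiv 0 v =
        (2⁻¹ : ℝ) • (Polynomial.aeval (qp c) (Polynomial.derivative f) * C c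
          + Polynomial.aeval (qm c) (Polynomial.derivative f) * (-C c))
        + (2 * c)⁻¹ • (Polynomial.aeval (qp c) (Polynomial.derivative G) * C c
          - Polynomial.aeval (qm c) (Polynomial.derivative G) * (-C c)) := by
      rw [hvdef, map_add, Derivation.map_smul, Derivation.map_smul, map_add, map_sub,
        pderiv_polyaeval, pderiv_polyaeval, pderiv_polyaeval, pderiv_polyaeval,
        pderiv0_qp, pderiv0_qm]
    have e2 : ev0 (pderiv 0 v) = g := by
      rw [hdv]
      simp only [map_add, map_smul, map_sub, map_mul, map_neg, ev0_polyaeval_qp,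
        ev0_polyaeval_qm, ev0_C, hGdef, derivative_antideriv]
      rw [mul_neg, add_neg_cancel, smul_zero, zero_add, mul_neg, sub_neg_eq_add]
      have hcomb : g * Polynomial.C c + g * Polynomial.C c = (2 * c) • g := by
        rw [mul_smul, two_smul, Polynomial.smul_eq_C_mul]; ring
      rw [hcomb, smul_smul, inv_mul_cancel₀ (mul_pos two_pos hc0).ne', one_smul]
    exact ⟨⟨v, hvS⟩, by
      refine Prod.ext (Subtype.ext ?_) (Subtype.ext ?_)
      · rw [hΦ] at *; exact (hΦ₁app ⟨v, hvS⟩).trans e1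
      · exact (hΦ₂app ⟨v, hvS⟩).trans e2⟩
  haveI : Module.Finite ℝ ↥(Polynomial.degreeLT ℝ (p + 1)) :=
    Module.Finite.equiv (Polynomial.degreeLTEquiv ℝ (p + 1)).symm
  haveI : Module.Finite ℝ ↥(Polynomial.degreeLT ℝ p) :=
    Module.Finite.equiv (Polynomial.degreeLTEquiv ℝ p).symm
  have e : S ≃ₗ[ℝ] ↥(Polynomial.degreeLT ℝ (p + 1)) × ↥(Polynomial.degreeLT ℝ p) :=
    LinearEquiv.ofBijective Φ ⟨hinj, hsurj⟩
  rw [e.finrank_eq, Module.finrank_prod,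
    (Polynomial.degreeLTEquiv ℝ (p + 1)).finrank_eq,
    (Polynomial.degreeLTEquiv ℝ p).finrank_eq,
    Module.finrank_fin_fun, Module.finrank_fin_fun]
  omega
end

section
/- Let a > 0 be a real constant and p ≥ 0 an integer. The set of real polynomials v in three variables (t, x, y) of total degree at most p that satisfy the formal polynomial identity ∂²v/∂t² − a·(∂²v/∂x² + ∂²v/∂y²) = 0 is an ℝ-linear subspace of the polynomial ring, and its dimension equals (p + 1)². -/
open MvPolynomial

section TrefftzAux

/-! Auxiliary material for `trefftz_dim_d2`. -/

private lemma trefftz_nat_card_sum_eq (m k : ℕ) :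
    Nat.card {s : Fin m →₀ ℕ | (s.sum fun _ e => e) = k} = (m + k - 1).choose k := by
  have e : {s : Fin m →₀ ℕ | (s.sum fun _ e => e) = k} ≃ Sym (Fin m) k :=
    (Equiv.subtypeEquivRight (fun s => by rfl)).trans (Sym.equivNatSum (Fin m) k).symm
  rw [Nat.card_congr e, Nat.card_eq_fintype_card, Sym.card_sym_eq_choose, Fintype.card_fin]

private lemma trefftz_nat_card_sum_le (n p : ℕ) :
    Nat.card {s : Fin n →₀ ℕ | (s.sum fun _ e => e) ≤ p} = (p + n).choose n := by
  have h1 : ∀ s : Fin n →₀ ℕ, (s.sum fun _ e => e) = ∑ i, s i :=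
    fun s => Finsupp.sum_fintype _ _ (fun _ => rfl)
  have h2 : ∀ s : Fin (n+1) →₀ ℕ, (s.sum fun _ e => e) = ∑ i, s i :=
    fun s => Finsupp.sum_fintype _ _ (fun _ => rfl)
  have e1 : {s : Fin n →₀ ℕ | (s.sum fun _ e => e) ≤ p} ≃ {f : Fin n → ℕ | ∑ i, f i ≤ p} :=
    Equiv.subtypeEquiv Finsupp.equivFunOnFinite (fun s => by rw [Set.mem_setOf_eq, h1 s]; rfl)
  have e3 : {s : Fin (n+1) →₀ ℕ | (s.sum fun _ e => e) = p}
      ≃ {f : Fin (n+1) → ℕ | ∑ i, f i = p} :=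
    Equiv.subtypeEquiv Finsupp.equivFunOnFinite (fun s => by rw [Set.mem_setOf_eq, h2 s]; rfl)
  have e2 : {f : Fin n → ℕ | ∑ i, f i ≤ p} ≃ {f : Fin (n+1) → ℕ | ∑ i, f i = p} := by
    refine ⟨fun f => ⟨Fin.snoc f.1 (p - ∑ i, f.1 i), ?_⟩, fun g => ⟨fun i => g.1 i.castSucc, ?_⟩,
      ?_, ?_⟩
    · have := f.2
      simp only [Set.mem_setOf_eq] at this ⊢
      rw [Fin.sum_univ_castSucc]
      simp only [Fin.snoc_castSucc, Fin.snoc_last]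
      omega
    · have := g.2
      simp only [Set.mem_setOf_eq] at this ⊢
      rw [Fin.sum_univ_castSucc] at this
      omega
    · intro f
      ext i
      simp [Fin.snoc_castSucc]
    · intro g
      have := g.2
      simp only [Set.mem_setOf_eq] at this
      rw [Fin.sum_univ_castSucc] at this
      ext i
      refine Fin.lastCases ?_ (fun j => ?_) i
      · simp only [Fin.snoc_last]
        omega
      · simp [Fin.snoc_castSucc]
  rw [Nat.card_congr ((e1.trans e2).trans e3.symm), trefftz_nat_card_sum_eq,
    show n + 1 + p - 1 = p + n by omega, Nat.choose_symm_add]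

private lemma trefftz_finrank_restrictTotalDegree (n m : ℕ) :
    Module.finrank ℝ (restrictTotalDegree (Fin n) ℝ m) = (m + n).choose n := by
  rw [restrictTotalDegree, Module.finrank_eq_nat_card_basis
    (basisRestrictSupport ℝ {s : Fin n →₀ ℕ | (s.sum fun _ e => e) ≤ m}),
    trefftz_nat_card_sum_le]

/-- The wave operator as a linear map. -/
noncomputable def waveOp (a : ℝ) : MvPolynomial (Fin 3) ℝ →ₗ[ℝ] MvPolynomial (Fin 3) ℝ :=
  ((pderiv 0).toLinearMap ∘ₗ (pderiv 0).toLinearMap)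
    - a • (((pderiv 1).toLinearMap ∘ₗ (pderiv 1).toLinearMap)
         + ((pderiv 2).toLinearMap ∘ₗ (pderiv 2).toLinearMap))

lemma waveOp_apply (a : ℝ) (v : MvPolynomial (Fin 3) ℝ) :
    waveOp a v = pderiv 0 (pderiv 0 v)
      - C a * (pderiv 1 (pderiv 1 v) + pderiv 2 (pderiv 2 v)) := by
  simp [waveOp, smul_eq_C_mul, mul_add]

private lemma trefftz_sum_eq_fin3 (s : Fin 3 →₀ ℕ) :
    (s.sum fun _ e => e) = s 0 + s 1 + s 2 := by
  rw [Finsupp.sum_fintype _ _ (fun _ => rfl), Fin.sum_univ_three]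

private lemma trefftz_sum_id_fin3 (s : Fin 3 →₀ ℕ) :
    (s.sum fun _ => id) = s 0 + s 1 + s 2 := by
  rw [Finsupp.sum_fintype _ _ (fun _ => rfl), Fin.sum_univ_three]; rfl

private lemma trefftz_totalDegree_pderiv_le (i : Fin 3) (f : MvPolynomial (Fin 3) ℝ) {m : ℕ}
    (hf : f.totalDegree ≤ m + 1) : (pderiv i f).totalDegree ≤ m := by
  conv_lhs => rw [f.as_sum]
  rw [map_sum]
  refine (totalDegree_finset_sum _ _).trans (Finset.sup_le fun s hs => ?_)
  rw [pderiv_monomial]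
  rcases Nat.eq_zero_or_pos (s i) with h | h
  · rw [h]
    simp
  · refine (totalDegree_monomial_le _ _).trans ?_
    have hd : (s.sum fun _ e => e) ≤ m + 1 := (le_totalDegree hs).trans hf
    rw [trefftz_sum_eq_fin3] at hd
    rw [trefftz_sum_id_fin3]
    have h0 : ∀ j, ((s - Finsupp.single i 1) : Fin 3 →₀ ℕ) j = s j - Finsupp.single i 1 j :=
      fun j => Finsupp.tsub_apply s _ j
    rw [h0, h0, h0]
    fin_cases i <;> simp [Finsupp.single_apply] at h ⊢ <;> omega

private lemma trefftz_pderiv_eq_zero (i : Fin 3) (f : MvPolynomial (Fin 3) ℝ)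
    (hf : f.totalDegree = 0) : pderiv i f = 0 := by
  rw [totalDegree_eq_zero_iff] at hf
  conv_lhs => rw [f.as_sum]
  rw [map_sum]
  refine Finset.sum_eq_zero fun s hs => ?_
  rw [pderiv_monomial, hf s hs i]
  simp

private lemma trefftz_pderiv_pderiv_monomial (j : Fin 3) (u : Fin 3 →₀ ℕ) (c : ℝ) :
    pderiv j (pderiv j (monomial u c)) =
      monomial (u - Finsupp.single j 2) (c * (u j) * ((u j - 1 : ℕ))) := by
  rw [pderiv_monomial, pderiv_monomial, tsub_tsub,
    show Finsupp.single j 1 + Finsupp.single j 1 = Finsupp.single j 2 by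
      rw [← Finsupp.single_add]]
  congr 2
  rw [Finsupp.tsub_apply, Finsupp.single_eq_same]

private lemma trefftz_monomial_mem (a : ℝ) (k : ℕ) : ∀ N : ℕ, ∀ s : Fin 3 →₀ ℕ,
    s 1 + s 2 ≤ N → (s.sum fun _ e => e) ≤ k →
    (monomial s 1 : MvPolynomial (Fin 3) ℝ) ∈
      Submodule.map (waveOp a) (restrictTotalDegree (Fin 3) ℝ (k + 2)) := by
  intro N
  induction N using Nat.strong_induction_on with
  | _ N IH =>
  intro s hsN hsk
  set T := Submodule.map (waveOp a) (restrictTotalDegree (Fin 3) ℝ (k + 2)) with hT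
  set u : Fin 3 →₀ ℕ := s + Finsupp.single 0 2 with hu
  set c : ℝ := (((s 0 : ℝ) + 1) * ((s 0 : ℝ) + 2))⁻¹ with hc
  have hu0 : u 0 = s 0 + 2 := by simp [hu]
  have hu1 : u 1 = s 1 := by simp [hu, Finsupp.single_apply]
  have hu2 : u 2 = s 2 := by simp [hu, Finsupp.single_apply]
  have husub : u - Finsupp.single 0 2 = s := by
    rw [hu, add_tsub_cancel_right]
  have hmain : pderiv 0 (pderiv 0 ((monomial u c : MvPolynomial (Fin 3) ℝ)))
      = monomial s 1 := by
    rw [trefftz_pderiv_pderiv_monomial, husub, hu0]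
    congr 1
    rw [hc]
    push_cast [Nat.add_sub_cancel]
    field_simp
  set u1 : Fin 3 →₀ ℕ := u - Finsupp.single 1 2 with hu1d
  set u2 : Fin 3 →₀ ℕ := u - Finsupp.single 2 2 with hu2d
  set c1 : ℝ := c * (s 1) * ((s 1 - 1 : ℕ)) with hc1
  set c2 : ℝ := c * (s 2) * ((s 2 - 1 : ℕ)) with hc2
  have key : (monomial s 1 : MvPolynomial (Fin 3) ℝ)
      = waveOp a (monomial u c) + C a * (monomial u1 c1 + monomial u2 c2) := by
    rw [waveOp_apply, hmain, trefftz_pderiv_pderiv_monomial, trefftz_pderiv_pderiv_monomial,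
      hu1, hu2, ← hu1d, ← hu2d, ← hc1, ← hc2]
    ring
  have hdegu : (monomial u c : MvPolynomial (Fin 3) ℝ) ∈
      restrictTotalDegree (Fin 3) ℝ (k + 2) := by
    rw [mem_restrictTotalDegree]
    refine (totalDegree_monomial_le _ _).trans ?_
    rw [trefftz_sum_eq_fin3] at hsk
    rw [trefftz_sum_id_fin3, hu0, hu1, hu2]
    omega
  have mem1 : (monomial u1 c1 : MvPolynomial (Fin 3) ℝ) ∈ T := by
    rcases Nat.lt_or_ge (s 1) 2 with h | h
    · have : c1 = 0 := by
        interval_cases h' : s 1 <;> simp [hc1]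
      rw [this, map_zero]
      exact T.zero_mem
    · have e0 : u1 0 = s 0 + 2 := by
        rw [hu1d, Finsupp.tsub_apply, hu0]; simp [Finsupp.single_apply]
      have e1 : u1 1 = s 1 - 2 := by
        rw [hu1d, Finsupp.tsub_apply, hu1]; simp
      have e2 : u1 2 = s 2 := by
        rw [hu1d, Finsupp.tsub_apply, hu2]; simp [Finsupp.single_apply]
      have hm : (monomial u1 1 : MvPolynomial (Fin 3) ℝ) ∈ T := by
        refine IH (s 1 + s 2 - 2) (by omega) u1 (by omega) ?_
        rw [trefftz_sum_eq_fin3] at hsk ⊢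
        rw [e0, e1, e2]
        omega
      have : (monomial u1 c1 : MvPolynomial (Fin 3) ℝ) = c1 • monomial u1 1 := by
        rw [smul_monomial, smul_eq_mul, mul_one]
      rw [this]
      exact T.smul_mem _ hm
  have mem2 : (monomial u2 c2 : MvPolynomial (Fin 3) ℝ) ∈ T := by
    rcases Nat.lt_or_ge (s 2) 2 with h | h
    · have : c2 = 0 := by
        interval_cases h' : s 2 <;> simp [hc2]
      rw [this, map_zero]
      exact T.zero_mem
    · have e0 : u2 0 = s 0 + 2 := by
        rw [hu2d, Finsupp.tsub_apply, hu0]; simp [Finsupp.single_apply]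
      have e1 : u2 1 = s 1 := by
        rw [hu2d, Finsupp.tsub_apply, hu1]; simp [Finsupp.single_apply]
      have e2 : u2 2 = s 2 - 2 := by
        rw [hu2d, Finsupp.tsub_apply, hu2]; simp
      have hm : (monomial u2 1 : MvPolynomial (Fin 3) ℝ) ∈ T := by
        refine IH (s 1 + s 2 - 2) (by omega) u2 (by omega) ?_
        rw [trefftz_sum_eq_fin3] at hsk ⊢
        rw [e0, e1, e2]
        omega
      have : (monomial u2 c2 : MvPolynomial (Fin 3) ℝ) = c2 • monomial u2 1 := by
        rw [smul_monomial, smul_eq_mul, mul_one]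
      rw [this]
      exact T.smul_mem _ hm
  rw [key]
  refine T.add_mem ⟨monomial u c, hdegu, rfl⟩ ?_
  rw [← smul_eq_C_mul]
  exact T.smul_mem _ (T.add_mem mem1 mem2)

private lemma trefftz_waveOp_surj (a : ℝ) (k : ℕ) :
    restrictTotalDegree (Fin 3) ℝ k ≤
      Submodule.map (waveOp a) (restrictTotalDegree (Fin 3) ℝ (k + 2)) := by
  rw [restrictTotalDegree, restrictSupport, AddMonoidAlgebra.supported_eq_span_single, Submodule.span_le]
  rintro _ ⟨s, hs, rfl⟩
  simp only [Set.mem_setOf_eq] at hs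
  show (AddMonoidAlgebra.single s 1 : MvPolynomial (Fin 3) ℝ) ∈ _
  rw [single_eq_monomial]
  exact trefftz_monomial_mem a k (s 1 + s 2) s le_rfl hs

private lemma trefftz_arith (k : ℕ) : (k + 5).choose 3 = (k + 3).choose 3 + (k + 3) ^ 2 := by
  induction k with
  | zero => decide
  | succ n ih =>
    have h1 : (n + 6).choose 3 = (n + 5).choose 2 + (n + 5).choose 3 :=
      Nat.choose_succ_succ (n + 5) 2
    have h2 : (n + 4).choose 3 = (n + 3).choose 2 + (n + 3).choose 3 :=
      Nat.choose_succ_succ (n + 3) 2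
    have h3 : (n + 5).choose 2 = (n + 4).choose 1 + (n + 4).choose 2 :=
      Nat.choose_succ_succ (n + 4) 1
    have h4 : (n + 4).choose 2 = (n + 3).choose 1 + (n + 3).choose 2 :=
      Nat.choose_succ_succ (n + 3) 1
    have h5 : (n + 4).choose 1 = n + 4 := Nat.choose_one_right _
    have h6 : (n + 3).choose 1 = n + 3 := Nat.choose_one_right _
    have sq1 : (n + 1 + 3) ^ 2 = (n + 3) ^ 2 + (2 * n + 7) := by ring
    have goal_eq : n + 1 + 5 = n + 6 := by ring
    have goal_eq2 : n + 1 + 3 = n + 4 := by ring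
    rw [goal_eq, goal_eq2, h1, h2, h3, h4, h5, h6,
      show (n + 4) ^ 2 = (n + 3) ^ 2 + (2 * n + 7) by ring]
    omega

end TrefftzAux

/-- **Dimension of the polynomial Trefftz space, case d = 2.**
The set of real polynomials `v` in three variables `t = X 0`, `x = X 1`,
`y = X 2` of total degree at most `p` satisfying the formal wave equation
`∂²v/∂t² - a·(∂²v/∂x² + ∂²v/∂y²) = 0` is an ℝ-linear subspace of dimension
`(p + 1)²`. -/
theorem trefftz_dim_d2 (a : ℝ) (ha : 0 < a) (p : ℕ) :
    ∃ S : Submodule ℝ (MvPolynomial (Fin 3) ℝ),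
      (S : Set (MvPolynomial (Fin 3) ℝ)) =
        {v : MvPolynomial (Fin 3) ℝ | v.totalDegree ≤ p ∧
          pderiv 0 (pderiv 0 v)
            - C a * (pderiv 1 (pderiv 1 v) + pderiv 2 (pderiv 2 v)) = 0} ∧
      Module.finrank ℝ S = (p + 1) ^ 2 := by
  refine ⟨restrictTotalDegree (Fin 3) ℝ p ⊓ LinearMap.ker (waveOp a), ?_, ?_⟩
  · ext v
    simp only [SetLike.mem_coe, Submodule.mem_inf, mem_restrictTotalDegree,
      LinearMap.mem_ker, Set.mem_setOf_eq, waveOp_apply]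
  · -- dimension computation
    have hlow : ∀ q : ℕ, q ≤ 1 → restrictTotalDegree (Fin 3) ℝ q ≤ LinearMap.ker (waveOp a) := by
      intro q hq v hv
      rw [mem_restrictTotalDegree] at hv
      rw [LinearMap.mem_ker, waveOp_apply]
      have hd1 : ∀ i : Fin 3, (pderiv i v).totalDegree = 0 := fun i =>
        Nat.le_zero.mp (trefftz_totalDegree_pderiv_le i v (hv.trans (by omega)))
      rw [trefftz_pderiv_eq_zero 0 _ (hd1 0), trefftz_pderiv_eq_zero 1 _ (hd1 1),
        trefftz_pderiv_eq_zero 2 _ (hd1 2)]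
      simp
    match p with
    | 0 =>
      rw [inf_eq_left.mpr (hlow 0 (by omega)), trefftz_finrank_restrictTotalDegree]
      decide
    | 1 =>
      rw [inf_eq_left.mpr (hlow 1 (by omega)), trefftz_finrank_restrictTotalDegree]
      decide
    | (k + 2) =>
      have hmap : ∀ v : MvPolynomial (Fin 3) ℝ, v ∈ restrictTotalDegree (Fin 3) ℝ (k + 2) →
          waveOp a v ∈ restrictTotalDegree (Fin 3) ℝ k := by
        intro v hv
        rw [mem_restrictTotalDegree] at hv ⊢
        rw [waveOp_apply]
        have hdd : ∀ i : Fin 3, (pderiv i (pderiv i v)).totalDegree ≤ k := fun i =>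
          trefftz_totalDegree_pderiv_le i _
            (trefftz_totalDegree_pderiv_le i v (by omega))
        calc (pderiv 0 (pderiv 0 v)
              - C a * (pderiv 1 (pderiv 1 v) + pderiv 2 (pderiv 2 v))).totalDegree
            ≤ max (pderiv 0 (pderiv 0 v)).totalDegree
              (C a * (pderiv 1 (pderiv 1 v) + pderiv 2 (pderiv 2 v))).totalDegree := by
              rw [sub_eq_add_neg]
              refine (totalDegree_add _ _).trans ?_
              rw [totalDegree_neg]
          _ ≤ k := by
              refine max_le (hdd 0) ?_
              rw [← smul_eq_C_mul]
              refine (totalDegree_smul_le _ _).trans ?_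
              exact (totalDegree_add _ _).trans (max_le (hdd 1) (hdd 2))
      set L' := (waveOp a).restrict hmap with hL'
      have hrange : LinearMap.range L' = ⊤ := by
        rw [Submodule.eq_top_iff']
        rintro ⟨x, hx⟩
        obtain ⟨v, hv, hveq⟩ := trefftz_waveOp_surj a k hx
        exact ⟨⟨v, hv⟩, Subtype.ext hveq⟩
      have hkereq : Module.finrank ℝ (LinearMap.ker L') =
          Module.finrank ℝ
            (restrictTotalDegree (Fin 3) ℝ (k + 2) ⊓ LinearMap.ker (waveOp a) :
              Submodule ℝ (MvPolynomial (Fin 3) ℝ)) := by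
        have h1 : LinearMap.ker L' =
            Submodule.comap (restrictTotalDegree (Fin 3) ℝ (k + 2)).subtype
              (restrictTotalDegree (Fin 3) ℝ (k + 2) ⊓ LinearMap.ker (waveOp a)) := by
          rw [hL', LinearMap.ker_restrict, Submodule.comap_inf,
            Submodule.comap_subtype_self, top_inf_eq]
        rw [h1]
        exact LinearEquiv.finrank_eq (Submodule.comapSubtypeEquivOfLe inf_le_left)
      have hrn := LinearMap.finrank_range_add_finrank_ker L'
      rw [hrange, finrank_top, hkereq] at hrn
      rw [trefftz_finrank_restrictTotalDegree, trefftz_finrank_restrictTotalDegree] at hrn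
      have h5 : (k + 2 + 3).choose 3 = (k + 5).choose 3 := by norm_num
      have h6 : (k + 2 + 1) ^ 2 = (k + 3) ^ 2 := by ring
      have := trefftz_arith k
      omega
end

section
/- Let a > 0 be a real constant and j ≥ 0 an integer. The set of homogeneous real polynomials v in three variables (t, x, y) of degree j that satisfy the formal polynomial identity ∂²v/∂t² − a·(∂²v/∂x² + ∂²v/∂y²) = 0 is an ℝ-linear subspace of dimension 2j + 1. -/
open MvPolynomial

namespace TrefftzAux
noncomputable section

lemma coeff_pderiv (i : Fin 3) (d : Fin 3 →₀ ℕ) (v : MvPolynomial (Fin 3) ℝ) :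
    coeff d (pderiv i v) = ((d i : ℝ) + 1) * coeff (d + Finsupp.single i 1) v := by
  induction v using MvPolynomial.induction_on' with
  | monomial e r =>
    rw [pderiv_monomial, coeff_monomial, coeff_monomial]
    by_cases h : e = d + Finsupp.single i 1
    · subst h
      have h1 : (d + Finsupp.single i 1) - Finsupp.single i 1 = d := by
        ext k; simp [Finsupp.single_apply]
      rw [if_pos h1, if_pos rfl]
      simp [Finsupp.add_apply]
      ring
    · have key : ¬ (e - Finsupp.single i 1 = d ∧ e i ≠ 0) := by
        rintro ⟨h1, h2⟩
        apply h
        ext k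
        have hk1 := DFunLike.congr_fun h1 k
        simp only [Finsupp.tsub_apply, Finsupp.add_apply, Finsupp.single_apply] at hk1 ⊢
        by_cases hk : i = k
        · subst hk; simp at hk1 ⊢; omega
        · simp [hk] at hk1 ⊢; omega
      by_cases he : e - Finsupp.single i 1 = d
      · have hei : e i = 0 := by
          by_contra hne; exact key ⟨he, hne⟩
        simp [he, hei, h]
      · simp [he, h]
  | add p q hp hq => simp [map_add, hp, hq]; ring

def mk3 (α β γ : ℕ) : Fin 3 →₀ ℕ :=
  Finsupp.single 0 α + Finsupp.single 1 β + Finsupp.single 2 γ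

@[simp] lemma mk3_apply0 (α β γ : ℕ) : mk3 α β γ 0 = α := by
  simp [mk3, Finsupp.single_apply]
@[simp] lemma mk3_apply1 (α β γ : ℕ) : mk3 α β γ 1 = β := by
  simp [mk3, Finsupp.single_apply]
@[simp] lemma mk3_apply2 (α β γ : ℕ) : mk3 α β γ 2 = γ := by
  simp [mk3, Finsupp.single_apply]

lemma eq_mk3 (e : Fin 3 →₀ ℕ) : e = mk3 (e 0) (e 1) (e 2) := by
  ext k; fin_cases k <;> simp [mk3, Finsupp.single_apply]

lemma degree_eq (e : Fin 3 →₀ ℕ) : e.degree = e 0 + e 1 + e 2 := by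
  rw [Finsupp.degree_apply, Finset.sum_subset (Finset.subset_univ e.support)]
  · rw [Fin.sum_univ_three]
  · intro x _ hx; simpa using hx

lemma mk3_add_single0 (α β γ : ℕ) : mk3 α β γ + Finsupp.single 0 2 = mk3 (α+2) β γ := by
  ext k; fin_cases k <;> simp [mk3, Finsupp.single_apply]
lemma mk3_add_single1 (α β γ : ℕ) : mk3 α β γ + Finsupp.single 1 2 = mk3 α (β+2) γ := by
  ext k; fin_cases k <;> simp [mk3, Finsupp.single_apply]
lemma mk3_add_single2 (α β γ : ℕ) : mk3 α β γ + Finsupp.single 2 2 = mk3 α β (γ+2) := by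
  ext k; fin_cases k <;> simp [mk3, Finsupp.single_apply]

lemma coeff_pderiv2 (i : Fin 3) (d : Fin 3 →₀ ℕ) (v : MvPolynomial (Fin 3) ℝ) :
    coeff d (pderiv i (pderiv i v))
      = ((d i : ℝ) + 1) * ((d i : ℝ) + 2) * coeff (d + Finsupp.single i 2) v := by
  rw [coeff_pderiv, coeff_pderiv]
  have h1 : ((d + Finsupp.single i 1 : Fin 3 →₀ ℕ)) i = d i + 1 := by
    simp [Finsupp.add_apply]
  have h2 : d + Finsupp.single i 1 + Finsupp.single i 1 = d + Finsupp.single i 2 := by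
    ext k; simp [Finsupp.single_apply]; split <;> omega
  rw [h1, h2]; push_cast; ring

lemma key_identity (a : ℝ) (v : MvPolynomial (Fin 3) ℝ)
    (hv : pderiv 0 (pderiv 0 v) - C a * (pderiv 1 (pderiv 1 v) + pderiv 2 (pderiv 2 v)) = 0)
    (d : Fin 3 →₀ ℕ) :
    ((d 0 : ℝ) + 1) * ((d 0 : ℝ) + 2) * coeff (d + Finsupp.single 0 2) v
      = a * (((d 1 : ℝ) + 1) * ((d 1 : ℝ) + 2) * coeff (d + Finsupp.single 1 2) v
           + ((d 2 : ℝ) + 1) * ((d 2 : ℝ) + 2) * coeff (d + Finsupp.single 2 2) v) := by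
  have := congrArg (coeff d) hv
  rw [coeff_sub, coeff_C_mul, coeff_add, coeff_pderiv2, coeff_pderiv2, coeff_pderiv2,
    coeff_zero] at this
  linarith

/-- a solution vanishing at t-degrees 0 and 1 is zero -/
lemma eq_zero_of_initial_zero (a : ℝ) (v : MvPolynomial (Fin 3) ℝ)
    (hv : pderiv 0 (pderiv 0 v) - C a * (pderiv 1 (pderiv 1 v) + pderiv 2 (pderiv 2 v)) = 0)
    (h01 : ∀ e : Fin 3 →₀ ℕ, e 0 ≤ 1 → coeff e v = 0) : v = 0 := by
  have H : ∀ n : ℕ, ∀ e : Fin 3 →₀ ℕ, e 0 = n → coeff e v = 0 := by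
    intro n
    induction n using Nat.strong_induction_on with
    | _ n ih =>
      match n with
      | 0 => intro e he; exact h01 e (by omega)
      | 1 => intro e he; exact h01 e (by omega)
      | (m+2) =>
        intro e he
        have key := key_identity a v hv (mk3 m (e 1) (e 2))
        rw [mk3_add_single0, mk3_add_single1, mk3_add_single2] at key
        simp only [mk3_apply0, mk3_apply1, mk3_apply2] at key
        have z1 : coeff (mk3 m (e 1 + 2) (e 2)) v = 0 := ih m (by omega) _ (by simp)
        have z2 : coeff (mk3 m (e 1) (e 2 + 2)) v = 0 := ih m (by omega) _ (by simp)
        rw [z1, z2] at key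
        have he2 : e = mk3 (m+2) (e 1) (e 2) := by rw [← he]; exact eq_mk3 e
        rw [← he2] at key
        have hpos : ((m:ℝ)+1) * ((m:ℝ)+2) ≠ 0 := by positivity
        have : ((m:ℝ)+1) * ((m:ℝ)+2) * coeff e v = 0 := by rw [key]; ring
        exact (mul_eq_zero.mp this).resolve_left hpos
  ext e
  rw [coeff_zero]
  exact H (e 0) e rfl

def f (a : ℝ) (c d : ℕ → ℝ) : ℕ → ℕ → ℕ → ℝ
  | 0, β, _ => c β
  | 1, β, _ => d β
  | (α+2), β, γ =>
      (a * (((β:ℝ)+1) * ((β:ℝ)+2) * f a c d α (β+2) γ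
          + ((γ:ℝ)+1) * ((γ:ℝ)+2) * f a c d α β (γ+2))) / (((α:ℝ)+1) * ((α:ℝ)+2))

def build (a : ℝ) (c d : ℕ → ℝ) (j : ℕ) : MvPolynomial (Fin 3) ℝ :=
  ∑ α ∈ Finset.range (j+1), ∑ β ∈ Finset.range (j+1-α),
    monomial (mk3 α β (j-α-β)) (f a c d α β (j-α-β))

lemma coeff_build (a : ℝ) (c d : ℕ → ℝ) (j : ℕ) (e : Fin 3 →₀ ℕ) :
    coeff e (build a c d j)
      = if e 0 + e 1 + e 2 = j then f a c d (e 0) (e 1) (e 2) else 0 := by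
  rw [build]
  simp only [coeff_sum, coeff_monomial]
  by_cases h : e 0 + e 1 + e 2 = j
  · rw [if_pos h]
    rw [Finset.sum_eq_single_of_mem (e 0) (by simp; omega)]
    · rw [Finset.sum_eq_single_of_mem (e 1) (by simp; omega)]
      · rw [if_pos]
        · congr 1; omega
        · ext k; fin_cases k <;> simp <;> omega
      · intro b _ hb
        rw [if_neg]
        intro hc
        apply hb
        have h1 := congrArg (fun g : Fin 3 →₀ ℕ => g 1) hc
        simpa using h1
    · intro b _ hb
      apply Finset.sum_eq_zero
      intro x _
      rw [if_neg]
      intro hc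
      apply hb
      have h1 := congrArg (fun g : Fin 3 →₀ ℕ => g 0) hc
      simpa using h1
  · rw [if_neg h]
    apply Finset.sum_eq_zero; intro α hα
    apply Finset.sum_eq_zero; intro β hβ
    rw [if_neg]
    intro hc
    simp only [Finset.mem_range] at hα hβ
    have h0 := congrArg (fun g : Fin 3 →₀ ℕ => g 0) hc
    have h1 := congrArg (fun g : Fin 3 →₀ ℕ => g 1) hc
    have h2 := congrArg (fun g : Fin 3 →₀ ℕ => g 2) hc
    simp at h0 h1 h2
    omega

lemma build_isHomogeneous (a : ℝ) (c d : ℕ → ℝ) (j : ℕ) :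
    (build a c d j).IsHomogeneous j := by
  apply IsHomogeneous.sum
  intro α hα
  apply IsHomogeneous.sum
  intro β hβ
  apply isHomogeneous_monomial
  rw [degree_eq]
  simp only [mk3_apply0, mk3_apply1, mk3_apply2]
  simp only [Finset.mem_range] at hα hβ
  omega

lemma build_solution (a : ℝ) (ha : 0 < a) (c d : ℕ → ℝ) (j : ℕ) :
    pderiv 0 (pderiv 0 (build a c d j))
      - C a * (pderiv 1 (pderiv 1 (build a c d j)) + pderiv 2 (pderiv 2 (build a c d j))) = 0 := by
  ext e
  rw [coeff_zero, coeff_sub, coeff_C_mul, coeff_add, coeff_pderiv2, coeff_pderiv2, coeff_pderiv2]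
  obtain ⟨α, β, γ, rfl⟩ : ∃ α β γ, e = mk3 α β γ := ⟨e 0, e 1, e 2, eq_mk3 e⟩
  rw [mk3_add_single0, mk3_add_single1, mk3_add_single2]
  simp only [mk3_apply0, mk3_apply1, mk3_apply2]
  rw [coeff_build, coeff_build, coeff_build]
  simp only [mk3_apply0, mk3_apply1, mk3_apply2]
  by_cases hj : α + β + γ + 2 = j
  · rw [if_pos (by omega), if_pos (by omega), if_pos (by omega)]
    show ((α:ℝ)+1) * ((α:ℝ)+2) * f a c d (α+2) β γ - _ = 0
    rw [show f a c d (α+2) β γ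
        = (a * (((β:ℝ)+1) * ((β:ℝ)+2) * f a c d α (β+2) γ
            + ((γ:ℝ)+1) * ((γ:ℝ)+2) * f a c d α β (γ+2))) / (((α:ℝ)+1) * ((α:ℝ)+2)) from rfl]
    have hne : ((α:ℝ)+1) * ((α:ℝ)+2) ≠ 0 := by positivity
    field_simp
    ring
  · rw [if_neg (by omega), if_neg (by omega), if_neg (by omega)]
    ring


lemma f_zero (a : ℝ) (c d : ℕ → ℝ) (β γ : ℕ) : f a c d 0 β γ = c β := rfl
lemma f_one (a : ℝ) (c d : ℕ → ℝ) (β γ : ℕ) : f a c d 1 β γ = d β := rfl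

end
end TrefftzAux

open TrefftzAux

/-- **Dimension of the space of homogeneous Trefftz polynomials, d = 2.**
The set of homogeneous real polynomials `v` of degree `j` in three variables
`t = X 0`, `x = X 1`, `y = X 2` satisfying the formal wave equation
`∂²v/∂t² - a·(∂²v/∂x² + ∂²v/∂y²) = 0` is an ℝ-linear subspace of dimension
`2j + 1`. -/
theorem trefftz_homogeneous_dim_d2 (a : ℝ) (ha : 0 < a) (j : ℕ) :
    ∃ S : Submodule ℝ (MvPolynomial (Fin 3) ℝ),
      (S : Set (MvPolynomial (Fin 3) ℝ)) =
        {v : MvPolynomial (Fin 3) ℝ | v.IsHomogeneous j ∧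
          pderiv 0 (pderiv 0 v)
            - C a * (pderiv 1 (pderiv 1 v) + pderiv 2 (pderiv 2 v)) = 0} ∧
      Module.finrank ℝ S = 2 * j + 1 := by
  classical
  set L : MvPolynomial (Fin 3) ℝ →ₗ[ℝ] MvPolynomial (Fin 3) ℝ :=
    ((pderiv (0:Fin 3)).toLinearMap ∘ₗ (pderiv (0:Fin 3)).toLinearMap)
      - a • (((pderiv (1:Fin 3)).toLinearMap ∘ₗ (pderiv (1:Fin 3)).toLinearMap)
           + ((pderiv (2:Fin 3)).toLinearMap ∘ₗ (pderiv (2:Fin 3)).toLinearMap)) with hLdef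
  have hL : ∀ v, L v = pderiv 0 (pderiv 0 v)
      - C a * (pderiv 1 (pderiv 1 v) + pderiv 2 (pderiv 2 v)) := by
    intro v
    simp [hLdef, smul_eq_C_mul, mul_add]
  set S : Submodule ℝ (MvPolynomial (Fin 3) ℝ) :=
    homogeneousSubmodule (Fin 3) ℝ j ⊓ LinearMap.ker L with hSdef
  have memS : ∀ v, v ∈ S ↔ v.IsHomogeneous j ∧
      pderiv 0 (pderiv 0 v) - C a * (pderiv 1 (pderiv 1 v) + pderiv 2 (pderiv 2 v)) = 0 := by
    intro v
    rw [hSdef, Submodule.mem_inf, mem_homogeneousSubmodule, LinearMap.mem_ker, hL]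
  refine ⟨S, ?_, ?_⟩
  · ext v
    simpa using memS v
  · -- the parametrizing map
    set Φ : MvPolynomial (Fin 3) ℝ →ₗ[ℝ] (Fin (j+1) → ℝ) × (Fin j → ℝ) :=
      LinearMap.prod
        (LinearMap.pi fun i : Fin (j+1) => lcoeff ℝ (mk3 0 (i:ℕ) (j - i)))
        (LinearMap.pi fun i : Fin j => lcoeff ℝ (mk3 1 (i:ℕ) (j - 1 - i))) with hPhi
    have hinj : Function.Injective (Φ.comp S.subtype) := by
      rw [← LinearMap.ker_eq_bot, LinearMap.ker_eq_bot']
      rintro ⟨v, hv⟩ hzero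
      rw [memS] at hv
      obtain ⟨hhom, hsol⟩ := hv
      have hz1 : ∀ i : Fin (j+1), coeff (mk3 0 (i:ℕ) (j - i)) v = 0 := by
        intro i
        have := congrFun (congrArg Prod.fst hzero) i
        simpa [hPhi] using this
      have hz2 : ∀ i : Fin j, coeff (mk3 1 (i:ℕ) (j - 1 - i)) v = 0 := by
        intro i
        have := congrFun (congrArg Prod.snd hzero) i
        simpa [hPhi] using this
      have h01 : ∀ e : Fin 3 →₀ ℕ, e 0 ≤ 1 → coeff e v = 0 := by
        intro e he
        by_cases hd : e.degree = j
        · rw [degree_eq] at hd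
          interval_cases h : e 0
          · have he' : e = mk3 0 (e 1) (j - e 1) := by
              have h2 : e 2 = j - e 1 := by omega
              conv_lhs => rw [eq_mk3 e]
              rw [h, h2]
            rw [he']
            exact hz1 ⟨e 1, by omega⟩
          · have he' : e = mk3 1 (e 1) (j - 1 - e 1) := by
              have h2 : e 2 = j - 1 - e 1 := by omega
              conv_lhs => rw [eq_mk3 e]
              rw [h, h2]
            rw [he']
            exact hz2 ⟨e 1, by omega⟩
        · exact hhom.coeff_eq_zero hd
      exact Subtype.ext (eq_zero_of_initial_zero a v hsol h01)
    have hsurj : Function.Surjective (Φ.comp S.subtype) := by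
      rintro ⟨c0, d0⟩
      set c : ℕ → ℝ := fun β => if h : β < j + 1 then c0 ⟨β, h⟩ else 0 with hc
      set dd : ℕ → ℝ := fun β => if h : β < j then d0 ⟨β, h⟩ else 0 with hdd
      refine ⟨⟨build a c dd j, ?_⟩, ?_⟩
      · rw [memS]
        exact ⟨build_isHomogeneous a c dd j, build_solution a ha c dd j⟩
      · refine Prod.ext ?_ ?_
        · funext i
          have hi : (i:ℕ) < j + 1 := i.isLt
          simp only [hPhi, LinearMap.comp_apply, Submodule.coe_subtype, LinearMap.prod_apply,
            Function.prod_apply, LinearMap.pi_apply, lcoeff_apply]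
          rw [coeff_build]
          rw [if_pos (by rw [mk3_apply0, mk3_apply1, mk3_apply2]; omega)]
          rw [mk3_apply0, mk3_apply1, mk3_apply2, f_zero]
          simp [hc, hi]
          intro h; exact absurd h (by omega)
        · funext i
          have hi : (i:ℕ) < j := i.isLt
          simp only [hPhi, LinearMap.comp_apply, Submodule.coe_subtype, LinearMap.prod_apply,
            Function.prod_apply, LinearMap.pi_apply, lcoeff_apply]
          rw [coeff_build]
          rw [if_pos (by rw [mk3_apply0, mk3_apply1, mk3_apply2]; omega)]
          rw [mk3_apply0, mk3_apply1, mk3_apply2, f_one]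
          simp [hdd, hi]
    have equiv := LinearEquiv.ofBijective (Φ.comp S.subtype) ⟨hinj, hsurj⟩
    rw [equiv.finrank_eq, Module.finrank_prod, Module.finrank_fin_fun, Module.finrank_fin_fun]
    omega
end

section
/- Let a > 0 be a real constant and j ≥ 0 an integer. The set of homogeneous real polynomials v in four variables (t, x, y, z) of degree j that satisfy the formal polynomial identity ∂²v/∂t² − a·(∂²v/∂x² + ∂²v/∂y² + ∂²v/∂z²) = 0 is an ℝ-linear subspace of dimension (j + 1)². -/
open MvPolynomial

namespace TrefftzAux

/-! ### Finsupp degree lemmas -/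

lemma degree_add (d e : Fin 4 →₀ ℕ) : (d + e).degree = d.degree + e.degree := by
  simp only [Finsupp.degree_eq_weight_one, map_add]

lemma degree_single (i : Fin 4) (n : ℕ) : (Finsupp.single i n).degree = n := by
  simp [Finsupp.degree_eq_weight_one, Finsupp.weight_apply, Finsupp.sum_single_index]

/-! ### Dimension of the space of homogeneous polynomials -/

/-- The set of exponents of degree `m` is equivalent to `Sym (Fin 4) m`. -/
noncomputable def expEquiv (m : ℕ) : {d : Fin 4 →₀ ℕ // d.degree = m} ≃ Sym (Fin 4) m where
  toFun d := ⟨Finsupp.toMultiset d.1, by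
    rw [Finsupp.card_toMultiset]
    simpa [Finsupp.degree_apply, Finsupp.sum] using d.2⟩
  invFun s := ⟨Multiset.toFinsupp s.1, by
    have : Multiset.card (Finsupp.toMultiset (Multiset.toFinsupp (s.1))) = m := by
      rw [Multiset.toFinsupp_toMultiset]; exact s.2
    rw [Finsupp.card_toMultiset] at this
    simpa [Finsupp.degree_apply, Finsupp.sum] using this⟩
  left_inv d := by ext1; exact Finsupp.toMultiset_toFinsupp d.1
  right_inv s := by ext1; exact Multiset.toFinsupp_toMultiset s.1

noncomputable instance (m : ℕ) : Fintype {d : Fin 4 →₀ ℕ // d.degree = m} :=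
  Fintype.ofEquiv _ (expEquiv m).symm

lemma card_exp (m : ℕ) : Fintype.card {d : Fin 4 →₀ ℕ // d.degree = m} = (m + 3).choose 3 := by
  rw [Fintype.card_congr (expEquiv m), Sym.card_sym_eq_choose, Fintype.card_fin]
  have h4 : 4 + m - 1 = m + 3 := by omega
  rw [h4, ← Nat.choose_symm (show 3 ≤ m + 3 by omega), show m + 3 - 3 = m from by omega]

noncomputable instance (m : ℕ) : Fintype ({d : Fin 4 →₀ ℕ | d.degree = m} : Set _) :=
  inferInstanceAs (Fintype {d : Fin 4 →₀ ℕ // d.degree = m})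

noncomputable def homogBasis (m : ℕ) :
    Module.Basis ({d : Fin 4 →₀ ℕ | d.degree = m} : Set _) ℝ
      (homogeneousSubmodule (Fin 4) ℝ m) :=
  (basisRestrictSupport ℝ _).map
    (LinearEquiv.ofEq _ _ (homogeneousSubmodule_eq_finsupp_supported _ _ m).symm)

instance (m : ℕ) : FiniteDimensional ℝ (homogeneousSubmodule (Fin 4) ℝ m) :=
  Module.Finite.of_basis (homogBasis m)

lemma finrank_homog (m : ℕ) :
    Module.finrank ℝ (homogeneousSubmodule (Fin 4) ℝ m) = (m + 3).choose 3 := by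
  rw [Module.finrank_eq_card_basis (homogBasis m)]
  exact card_exp m

/-! ### The wave operator -/

/-- The wave operator `∂ₜ² - a Δ` as a linear map. -/
noncomputable def Dop (a : ℝ) :
    MvPolynomial (Fin 4) ℝ →ₗ[ℝ] MvPolynomial (Fin 4) ℝ :=
  ((pderiv 0 : Derivation ℝ _ _).toLinearMap ∘ₗ (pderiv 0 : Derivation ℝ _ _).toLinearMap)
    - a • (((pderiv 1 : Derivation ℝ _ _).toLinearMap ∘ₗ (pderiv 1 : Derivation ℝ _ _).toLinearMap)
        + ((pderiv 2 : Derivation ℝ _ _).toLinearMap ∘ₗ (pderiv 2 : Derivation ℝ _ _).toLinearMap)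
        + ((pderiv 3 : Derivation ℝ _ _).toLinearMap ∘ₗ (pderiv 3 : Derivation ℝ _ _).toLinearMap))

lemma Dop_apply' (a : ℝ) (v : MvPolynomial (Fin 4) ℝ) :
    Dop a v = pderiv 0 (pderiv 0 v)
      - a • (pderiv 1 (pderiv 1 v) + pderiv 2 (pderiv 2 v) + pderiv 3 (pderiv 3 v)) := by
  simp [Dop]

lemma Dop_apply (a : ℝ) (v : MvPolynomial (Fin 4) ℝ) :
    Dop a v = pderiv 0 (pderiv 0 v)
      - C a * (pderiv 1 (pderiv 1 v) + pderiv 2 (pderiv 2 v) + pderiv 3 (pderiv 3 v)) := by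
  rw [Dop_apply', smul_eq_C_mul]

/-! ### Homogeneity of derivatives -/

lemma pderiv_isHomogeneous {v : MvPolynomial (Fin 4) ℝ} {n : ℕ} (h : v.IsHomogeneous n)
    (i : Fin 4) : (pderiv i v).IsHomogeneous (n - 1) := by
  rw [v.as_sum, map_sum]
  apply IsHomogeneous.sum
  intro d hd
  rw [pderiv_monomial]
  rcases Nat.eq_zero_or_pos (d i) with h0 | h0
  · rw [h0]; norm_num; exact isHomogeneous_zero _ _ _
  · apply isHomogeneous_monomial
    have hle : Finsupp.single i 1 ≤ d := by
      rw [Finsupp.single_le_iff]; exact h0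
    have hdeg : d.degree = n := by
      have := h (mem_support_iff.mp hd)
      rw [Finsupp.degree_eq_weight_one]; exact this
    have heq : (d - Finsupp.single i 1) + Finsupp.single i 1 = d := tsub_add_cancel_of_le hle
    have h2 : (d - Finsupp.single i 1).degree + 1 = n := by
      conv_rhs => rw [← hdeg, ← heq]
      rw [degree_add, degree_single]
    omega

lemma pderiv_of_isHomogeneous_zero {v : MvPolynomial (Fin 4) ℝ} (h : v.IsHomogeneous 0)
    (i : Fin 4) : pderiv i v = 0 := by
  rw [v.as_sum, map_sum]
  apply Finset.sum_eq_zero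
  intro d hd
  have hdeg : d.degree = 0 := by
    have := h (mem_support_iff.mp hd)
    rw [Finsupp.degree_eq_weight_one]; exact this
  have hd0 : d = 0 := (Finsupp.degree_eq_zero_iff d).mp hdeg
  subst hd0
  rw [pderiv_monomial]
  simp

lemma Dop_mem (a : ℝ) {m : ℕ} {v : MvPolynomial (Fin 4) ℝ}
    (h : v ∈ homogeneousSubmodule (Fin 4) ℝ (m + 2)) :
    Dop a v ∈ homogeneousSubmodule (Fin 4) ℝ m := by
  rw [mem_homogeneousSubmodule] at h ⊢
  rw [Dop_apply]
  have key : ∀ i : Fin 4, ((pderiv i) ((pderiv i) v)).IsHomogeneous m := by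
    intro i
    have := pderiv_isHomogeneous (pderiv_isHomogeneous h i) i
    simpa using this
  exact ((key 0).sub ((((key 1).add (key 2)).add (key 3)).C_mul a))

/-! ### Surjectivity of the wave operator on homogeneous polynomials -/

lemma monomial_mem (a : ℝ) (m : ℕ) :
    ∀ N : ℕ, ∀ d : Fin 4 →₀ ℕ, d.degree = m → d 1 + d 2 + d 3 ≤ N →
      (monomial d 1 : MvPolynomial (Fin 4) ℝ) ∈
        (homogeneousSubmodule (Fin 4) ℝ (m + 2)).map (Dop a) := by
  intro N
  induction N using Nat.strong_induction_on with
  | _ N IH =>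
  intro d hdeg hsum
  set T := (homogeneousSubmodule (Fin 4) ℝ (m + 2)).map (Dop a) with hT
  set e : Fin 4 →₀ ℕ := d + Finsupp.single 0 2 with he
  have he0 : e 0 = d 0 + 2 := by simp [he]
  have hei : ∀ i : Fin 4, i ≠ 0 → e i = d i := by
    intro i hi
    simp [he, Finsupp.single_apply, Ne.symm hi]
  have heH : (monomial e 1 : MvPolynomial (Fin 4) ℝ) ∈ homogeneousSubmodule (Fin 4) ℝ (m+2) := by
    rw [mem_homogeneousSubmodule]
    exact isHomogeneous_monomial _ (by rw [he, degree_add, degree_single, hdeg])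
  have hexp0 : e - Finsupp.single (0 : Fin 4) 1 - Finsupp.single (0 : Fin 4) 1 = d := by
    ext k
    rcases eq_or_ne k 0 with rfl | hk
    · simp [he]
    · simp [he, Finsupp.single_apply, Ne.symm hk]
  have hv0 : (e - Finsupp.single (0 : Fin 4) 1 : Fin 4 →₀ ℕ) 0 = d 0 + 1 := by simp [he]
  have hd0 : (pderiv 0) ((pderiv 0) (monomial e 1 : MvPolynomial (Fin 4) ℝ))
      = ((((d 0 + 2) * (d 0 + 1) : ℕ) : ℝ)) • monomial d 1 := by
    rw [pderiv_monomial, pderiv_monomial, hexp0, hv0, he0, smul_monomial, smul_eq_mul,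
      mul_one]
    push_cast
    ring_nf
  have hterm : ∀ i : Fin 4, i ≠ 0 →
      (pderiv i) ((pderiv i) (monomial e 1 : MvPolynomial (Fin 4) ℝ)) ∈ T := by
    intro i hi
    rw [pderiv_monomial, pderiv_monomial]
    have h1 : (e - Finsupp.single i 1 : Fin 4 →₀ ℕ) i = d i - 1 := by
      simp [hei i hi, Finsupp.single_apply]
    rw [h1, hei i hi]
    rcases Nat.lt_or_ge (d i) 2 with hlt | hge
    · interval_cases h : (d i) <;> simp
    · set g : Fin 4 →₀ ℕ := e - Finsupp.single i 1 - Finsupp.single i 1 with hg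
      have hgi : g + Finsupp.single i 2 = e := by
        ext k
        by_cases hk : k = i
        · subst hk
          have h2 := hei k hi
          simp only [hg, Finsupp.add_apply, Finsupp.coe_tsub, Pi.sub_apply,
            Finsupp.single_eq_same]
          omega
        · simp [hg, Finsupp.single_apply, Ne.symm hk, hk]
      have hgdeg : g.degree = m := by
        have h3 : g.degree + 2 = m + 2 := by
          have hE : e.degree = m + 2 := by rw [he, degree_add, degree_single, hdeg]
          rw [← hE, ← hgi, degree_add, degree_single]
        omega
      have hgsum : g 1 + g 2 + g 3 + 2 = d 1 + d 2 + d 3 := by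
        have hgk : ∀ k : Fin 4, k ≠ 0 → k ≠ i → g k = d k := by
          intro k hk0 hki
          simp [hg, Finsupp.single_apply, Ne.symm hki, hei k hk0]
        have hgii : g i = d i - 2 := by
          simp [hg, Finsupp.single_apply, hei i hi]
          omega
        fin_cases i <;> simp_all <;> omega
      have hmem : (monomial g 1 : MvPolynomial (Fin 4) ℝ) ∈ T :=
        IH (g 1 + g 2 + g 3) (by omega) g hgdeg le_rfl
      have h4 : (monomial g ((1 * (d i : ℝ)) * ((d i - 1 : ℕ) : ℝ)) : MvPolynomial (Fin 4) ℝ)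
          = ((1 * (d i : ℝ)) * ((d i - 1 : ℕ) : ℝ)) • monomial g 1 := by
        rw [smul_monomial, smul_eq_mul, mul_one]
      rw [h4]
      exact T.smul_mem _ hmem
  have hD : Dop a (monomial e 1 : MvPolynomial (Fin 4) ℝ) ∈ T :=
    Submodule.mem_map_of_mem heH
  have hsum_mem : a • ((pderiv 1) ((pderiv 1) (monomial e 1 : MvPolynomial (Fin 4) ℝ))
      + (pderiv 2) ((pderiv 2) (monomial e 1 : MvPolynomial (Fin 4) ℝ))
      + (pderiv 3) ((pderiv 3) (monomial e 1 : MvPolynomial (Fin 4) ℝ))) ∈ T := by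
    refine T.smul_mem _ (T.add_mem (T.add_mem ?_ ?_) ?_) <;>
      [exact hterm 1 (by decide); exact hterm 2 (by decide); exact hterm 3 (by decide)]
  have hcomb : (((d 0 + 2) * (d 0 + 1) : ℕ) : ℝ) • (monomial d 1 : MvPolynomial (Fin 4) ℝ) ∈ T := by
    have h5 := T.add_mem hD hsum_mem
    rwa [Dop_apply', sub_add_cancel, hd0] at h5
  have hc : (((d 0 + 2) * (d 0 + 1) : ℕ) : ℝ) ≠ 0 := by positivity
  have h6 := T.smul_mem ((((d 0 + 2) * (d 0 + 1) : ℕ) : ℝ))⁻¹ hcomb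
  rwa [inv_smul_smul₀ hc] at h6

lemma homog_le_map (a : ℝ) (m : ℕ) :
    homogeneousSubmodule (Fin 4) ℝ m ≤ (homogeneousSubmodule (Fin 4) ℝ (m + 2)).map (Dop a) := by
  intro q hq
  rw [q.as_sum]
  apply Submodule.sum_mem
  intro d hd
  have hdeg : d.degree = m := by
    have := (mem_homogeneousSubmodule _ _).mp hq (mem_support_iff.mp hd)
    rw [Finsupp.degree_eq_weight_one]; exact this
  have h1 : (monomial d (coeff d q) : MvPolynomial (Fin 4) ℝ) = coeff d q • monomial d 1 := by
    rw [smul_monomial, smul_eq_mul, mul_one]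
  rw [h1]
  exact Submodule.smul_mem _ _ (monomial_mem a m (d 1 + d 2 + d 3) d hdeg le_rfl)

/-! ### Binomial arithmetic -/

lemma choose_id (m : ℕ) : (m + 3).choose 3 + (m + 3) ^ 2 = (m + 5).choose 3 := by
  induction m with
  | zero => decide
  | succ n ih =>
    rw [show n + 1 + 3 = (n + 3) + 1 from rfl, show n + 1 + 5 = (n + 5) + 1 from rfl,
      Nat.choose_succ_succ (n + 3) 2, Nat.choose_succ_succ (n + 5) 2]
    have h2 : (n + 5).choose 2 = (n + 3).choose 2 + (2 * n + 7) := by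
      rw [show n + 5 = (n + 4) + 1 from rfl, Nat.choose_succ_succ (n + 4) 1,
        show n + 4 = (n + 3) + 1 from rfl, Nat.choose_succ_succ (n + 3) 1,
        Nat.choose_one_right, Nat.choose_one_right]
      simp only [Nat.succ_eq_add_one, Nat.reduceAdd] at *
      omega
    have h3 : (n + 3 + 1) ^ 2 = (n + 3) ^ 2 + (2 * n + 7) := by ring
    have h3' : (n + 1 + 3) ^ 2 = (n + 3) ^ 2 + (2 * n + 7) := by ring
    simp only [Nat.succ_eq_add_one, Nat.reduceAdd] at *
    omega

end TrefftzAux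

open TrefftzAux in
/-- **Dimension of the space of homogeneous Trefftz polynomials, d = 3.**
The set of homogeneous real polynomials `v` of degree `j` in four variables
`t = X 0`, `x = X 1`, `y = X 2`, `z = X 3` satisfying the formal wave equation
`∂²v/∂t² - a·(∂²v/∂x² + ∂²v/∂y² + ∂²v/∂z²) = 0` is an ℝ-linear subspace of
dimension `(j + 1)²`. -/
theorem trefftz_homogeneous_dim_d3 (a : ℝ) (ha : 0 < a) (j : ℕ) :
    ∃ S : Submodule ℝ (MvPolynomial (Fin 4) ℝ),
      (S : Set (MvPolynomial (Fin 4) ℝ)) =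
        {v : MvPolynomial (Fin 4) ℝ | v.IsHomogeneous j ∧
          pderiv 0 (pderiv 0 v)
            - C a * (pderiv 1 (pderiv 1 v) + pderiv 2 (pderiv 2 v)
                + pderiv 3 (pderiv 3 v)) = 0} ∧
      Module.finrank ℝ S = (j + 1) ^ 2 := by
  rcases le_or_gt j 1 with hj | hj
  · -- low-degree case: every homogeneous polynomial is a solution
    refine ⟨homogeneousSubmodule (Fin 4) ℝ j, ?_, ?_⟩
    · ext v
      simp only [SetLike.mem_coe, mem_homogeneousSubmodule, Set.mem_setOf_eq]
      refine ⟨fun hv => ⟨hv, ?_⟩, fun h => h.1⟩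
      have hpp : ∀ i : Fin 4, pderiv i (pderiv i v) = 0 := by
        intro i
        have h1 : (pderiv i v).IsHomogeneous 0 := by
          have := pderiv_isHomogeneous hv i
          rwa [show j - 1 = 0 by omega] at this
        exact pderiv_of_isHomogeneous_zero h1 i
      rw [hpp 0, hpp 1, hpp 2, hpp 3]
      simp
    · interval_cases j
      · rw [finrank_homog]; decide
      · rw [finrank_homog]; decide
  · -- main case : j = m + 2
    obtain ⟨m, rfl⟩ : ∃ m, j = m + 2 := ⟨j - 2, by omega⟩
    set H := homogeneousSubmodule (Fin 4) ℝ (m + 2) with hH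
    set S : Submodule ℝ (MvPolynomial (Fin 4) ℝ) := H ⊓ LinearMap.ker (Dop a) with hS
    refine ⟨S, ?_, ?_⟩
    · ext v
      simp only [hS, Submodule.mem_inf, SetLike.mem_coe, mem_homogeneousSubmodule,
        LinearMap.mem_ker, Set.mem_setOf_eq, hH, Dop_apply]
    · -- rank-nullity
      set f : H →ₗ[ℝ] homogeneousSubmodule (Fin 4) ℝ m :=
        (Dop a).restrict (fun x hx => Dop_mem a hx) with hf
      have hsurj : Function.Surjective f := by
        rintro ⟨q, hq⟩
        obtain ⟨v, hv, hvq⟩ := homog_le_map a m hq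
        exact ⟨⟨v, hv⟩, Subtype.ext (by simpa [hf, LinearMap.restrict_apply] using hvq)⟩
      have hrange : LinearMap.range f = ⊤ := LinearMap.range_eq_top.mpr hsurj
      have hrn := LinearMap.finrank_range_add_finrank_ker f
      rw [hrange, finrank_top] at hrn
      have hker : LinearMap.ker f = Submodule.comap H.subtype S := by
        ext x
        simp only [LinearMap.mem_ker, Submodule.mem_comap, Submodule.subtype_apply, hS,
          Submodule.mem_inf, LinearMap.mem_ker]
        constructor
        · intro hx
          refine ⟨x.2, ?_⟩
          have := congrArg (Subtype.val) hx
          simpa [hf, LinearMap.restrict_apply] using this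
        · intro hx
          apply Subtype.ext
          simpa [hf, LinearMap.restrict_apply] using hx.2
      have heq : Module.finrank ℝ (LinearMap.ker f) = Module.finrank ℝ S := by
        have hmem : ∀ x : LinearMap.ker f, (x : H).1 ∈ S := by
          rintro ⟨⟨v, hvH⟩, hvk⟩
          rw [LinearMap.mem_ker] at hvk
          have hD : Dop a v = 0 := by
            have := congrArg Subtype.val hvk
            simpa [hf, LinearMap.restrict_apply] using this
          exact Submodule.mem_inf.mpr ⟨hvH, LinearMap.mem_ker.mpr hD⟩
        refine LinearEquiv.finrank_eq (LinearEquiv.ofBijective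
          (LinearMap.codRestrict S (H.subtype.comp (LinearMap.ker f).subtype) hmem) ⟨?_, ?_⟩)
        · intro x y hxy
          apply Subtype.ext; apply Subtype.ext
          have h := congrArg Subtype.val hxy; exact h
        · rintro ⟨v, hv⟩
          obtain ⟨hvH, hvk⟩ := Submodule.mem_inf.mp hv
          have hD : Dop a v = 0 := LinearMap.mem_ker.mp hvk
          refine ⟨⟨⟨v, hvH⟩, ?_⟩, rfl⟩
          rw [LinearMap.mem_ker]
          apply Subtype.ext
          simpa [hf, LinearMap.restrict_apply] using hD
      rw [heq, hH] at hrn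
      have h1 := finrank_homog m
      have h2 := finrank_homog (m + 2)
      have h3 := choose_id m
      have h4 : m + 2 + 3 = m + 5 := by omega
      rw [h4] at h2
      have : Module.finrank ℝ S = (m + 3) ^ 2 := by omega
      rw [this]
end

section
/- Let d > 0 be a real constant and define F : (0, 1) → ℝ by F(γ) = (2γd)^{2γ}·(1 − γ)^{1 − γ}/(1 + γ)^{1 + γ}. Then F attains its global minimum on (0, 1) at the point γ_min = (1 + 4d²)^{−1/2}, i.e. F(γ_min) ≤ F(γ) for all γ ∈ (0, 1), and moreover F(γ_min) < 1. -/
open Real Set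

private noncomputable def Gfun (d : ℝ) (γ : ℝ) : ℝ :=
  2 * γ * Real.log (2 * γ * d) + (1 - γ) * Real.log (1 - γ) - (1 + γ) * Real.log (1 + γ)

private lemma Gfun_hasDerivAt (d : ℝ) (hd : 0 < d) {x : ℝ} (hx : x ∈ Set.Ioo (0:ℝ) 1) :
    HasDerivAt (Gfun d) (2 * Real.log (2 * x * d) - Real.log (1 - x) - Real.log (1 + x)) x := by
  obtain ⟨hx0, hx1⟩ := hx
  have hb : (0:ℝ) < 2 * x * d := by positivity
  have h1 : HasDerivAt (fun γ : ℝ => 2 * γ * d) (2 * d) x := by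
    simpa using ((hasDerivAt_id x).const_mul 2).mul_const d
  have hlog1 : HasDerivAt (fun γ : ℝ => Real.log (2 * γ * d)) (2 * d / (2 * x * d)) x :=
    by
    have h := (Real.hasDerivAt_log hb.ne').comp x h1
    exact h.congr_deriv (by field_simp)
  have ht1 : HasDerivAt (fun γ : ℝ => 2 * γ * Real.log (2 * γ * d))
      (2 * Real.log (2 * x * d) + 2 * x * (2 * d / (2 * x * d))) x := by
    have h := (((hasDerivAt_id x).const_mul 2).mul hlog1)
    simp only [id_eq, mul_one] at h
    exact h
  have h2 : HasDerivAt (fun γ : ℝ => (1:ℝ) - γ) (-1) x := by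
    simpa using (hasDerivAt_id x).const_sub 1
  have hlog2 : HasDerivAt (fun γ : ℝ => Real.log (1 - γ)) (-1 / (1 - x)) x :=
    (Real.hasDerivAt_log (by linarith : (1:ℝ) - x ≠ 0)).comp x h2 |>.congr_deriv (by ring)
  have ht2 : HasDerivAt (fun γ : ℝ => (1 - γ) * Real.log (1 - γ))
      ((-1) * Real.log (1 - x) + (1 - x) * (-1 / (1 - x))) x := h2.mul hlog2
  have h3 : HasDerivAt (fun γ : ℝ => (1:ℝ) + γ) 1 x := by
    simpa using (hasDerivAt_id x).const_add 1
  have hlog3 : HasDerivAt (fun γ : ℝ => Real.log (1 + γ)) (1 / (1 + x)) x :=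
    (Real.hasDerivAt_log (by linarith : (1:ℝ) + x ≠ 0)).comp x h3 |>.congr_deriv (by ring)
  have ht3 : HasDerivAt (fun γ : ℝ => (1 + γ) * Real.log (1 + γ))
      (1 * Real.log (1 + x) + (1 + x) * (1 / (1 + x))) x := h3.mul hlog3
  have hall := (ht1.add ht2).sub ht3
  have hx1' : (1:ℝ) - x ≠ 0 := by linarith
  have hx2' : (1:ℝ) + x ≠ 0 := by linarith
  refine hall.congr_deriv ?_
  field_simp
  ring

private lemma Gfun_deriv_neg (d γ0 : ℝ) (hd : 0 < d) (hγ0 : γ0 ^ 2 * (1 + 4 * d ^ 2) = 1)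
    {y : ℝ} (hy : y ∈ Set.Ioo (0:ℝ) 1) (h : y < γ0) :
    2 * Real.log (2 * y * d) - Real.log (1 - y) - Real.log (1 + y) < 0 := by
  obtain ⟨hy0, hy1⟩ := hy
  have hsq : y ^ 2 < γ0 ^ 2 := by nlinarith
  have hlt : (2 * y * d) ^ 2 < (1 - y) * (1 + y) := by nlinarith [sq_nonneg d]
  have hlog := Real.log_lt_log (by positivity : (0:ℝ) < (2 * y * d) ^ 2) hlt
  rw [Real.log_mul (by linarith) (by linarith), Real.log_pow] at hlog
  push_cast at hlog
  linarith

private lemma Gfun_deriv_pos (d γ0 : ℝ) (_hd : 0 < d) (hγ0 : γ0 ^ 2 * (1 + 4 * d ^ 2) = 1)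
    (hγ0pos : 0 < γ0) {y : ℝ} (hy : y ∈ Set.Ioo (0:ℝ) 1) (h : γ0 < y) :
    0 < 2 * Real.log (2 * y * d) - Real.log (1 - y) - Real.log (1 + y) := by
  obtain ⟨hy0, hy1⟩ := hy
  have hsq : γ0 ^ 2 < y ^ 2 := by nlinarith
  have hlt : (1 - y) * (1 + y) < (2 * y * d) ^ 2 := by nlinarith [sq_nonneg d]
  have hlog := Real.log_lt_log (by nlinarith : (0:ℝ) < (1 - y) * (1 + y)) hlt
  rw [Real.log_mul (by linarith) (by linarith), Real.log_pow] at hlog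
  push_cast at hlog
  linarith

/-- **Minimisation of `F(γ) = (2γd)^{2γ}(1−γ)^{1−γ}/(1+γ)^{1+γ}` on `(0,1)`.**
For `d > 0`, the function `F` attains its global minimum on `(0, 1)` at
`γ_min = (1 + 4d²)^{−1/2}`, and `F(γ_min) < 1`. -/
theorem F_min_at_gamma_min (d : ℝ) (hd : 0 < d) (F : ℝ → ℝ)
    (hF : ∀ γ : ℝ, F γ =
      (2 * γ * d) ^ (2 * γ) * (1 - γ) ^ (1 - γ) / (1 + γ) ^ (1 + γ))
    (γmin : ℝ) (hγmin : γmin = (1 + 4 * d ^ 2) ^ (-(1 : ℝ) / 2)) :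
    γmin ∈ Set.Ioo (0 : ℝ) 1 ∧
    (∀ γ ∈ Set.Ioo (0 : ℝ) 1, F γmin ≤ F γ) ∧
    F γmin < 1 := by
  have hA : (1:ℝ) < 1 + 4 * d ^ 2 := by nlinarith
  have hA0 : (0:ℝ) < 1 + 4 * d ^ 2 := by linarith
  have hγ0pos : 0 < γmin := by
    rw [hγmin]; exact Real.rpow_pos_of_pos hA0 _
  have hγ0lt1 : γmin < 1 := by
    rw [hγmin]
    exact Real.rpow_lt_one_of_one_lt_of_neg hA (by norm_num)
  have hmem : γmin ∈ Set.Ioo (0:ℝ) 1 := ⟨hγ0pos, hγ0lt1⟩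
  -- key algebraic identity
  have hsq : γmin ^ 2 * (1 + 4 * d ^ 2) = 1 := by
    have : γmin ^ 2 = (1 + 4 * d ^ 2)⁻¹ := by
      rw [hγmin, ← Real.rpow_natCast ((1 + 4 * d ^ 2) ^ (-(1:ℝ)/2)) 2,
        ← Real.rpow_mul hA0.le]
      norm_num
      rw [Real.rpow_neg_one]
    rw [this]
    field_simp
  -- F equals exp ∘ Gfun on (0,1)
  have hFexp : ∀ γ ∈ Set.Ioo (0:ℝ) 1, F γ = Real.exp (Gfun d γ) := by
    intro γ hγ
    obtain ⟨h0, h1⟩ := hγ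
    have hb1 : (0:ℝ) < 2 * γ * d := by positivity
    have hb2 : (0:ℝ) < 1 - γ := by linarith
    have hb3 : (0:ℝ) < 1 + γ := by linarith
    rw [hF, Real.rpow_def_of_pos hb1, Real.rpow_def_of_pos hb2, Real.rpow_def_of_pos hb3,
      ← Real.exp_add, ← Real.exp_sub]
    unfold Gfun
    congr 1
    ring
  refine ⟨hmem, ?_, ?_⟩
  · -- minimization
    intro γ hγ
    rw [hFexp γ hγ, hFexp γmin hmem, Real.exp_le_exp]
    rcases lt_trichotomy γ γmin with hlt | heq | hgt
    · have hsub : Set.Icc γ γmin ⊆ Set.Ioo (0:ℝ) 1 := fun x hx =>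
        ⟨lt_of_lt_of_le hγ.1 hx.1, lt_of_le_of_lt hx.2 hγ0lt1⟩
      have hanti : StrictAntiOn (Gfun d) (Set.Icc γ γmin) := by
        apply strictAntiOn_of_deriv_neg (convex_Icc _ _)
        · exact fun x hx => (Gfun_hasDerivAt d hd (hsub hx)).continuousAt.continuousWithinAt
        · intro x hx
          rw [interior_Icc] at hx
          have hx' : x ∈ Set.Ioo (0:ℝ) 1 := hsub ⟨hx.1.le, hx.2.le⟩
          rw [(Gfun_hasDerivAt d hd hx').deriv]
          exact Gfun_deriv_neg d γmin hd hsq hx' hx.2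
      exact (hanti ⟨le_refl γ, hlt.le⟩ ⟨hlt.le, le_refl γmin⟩ hlt).le
    · rw [heq]
    · have hsub : Set.Icc γmin γ ⊆ Set.Ioo (0:ℝ) 1 := fun x hx =>
        ⟨lt_of_lt_of_le hγ0pos hx.1, lt_of_le_of_lt hx.2 hγ.2⟩
      have hmono : StrictMonoOn (Gfun d) (Set.Icc γmin γ) := by
        apply strictMonoOn_of_deriv_pos (convex_Icc _ _)
        · exact fun x hx => (Gfun_hasDerivAt d hd (hsub hx)).continuousAt.continuousWithinAt
        · intro x hx
          rw [interior_Icc] at hx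
          have hx' : x ∈ Set.Ioo (0:ℝ) 1 := hsub ⟨hx.1.le, hx.2.le⟩
          rw [(Gfun_hasDerivAt d hd hx').deriv]
          exact Gfun_deriv_pos d γmin hd hsq hγ0pos hx' hx.1
      exact (hmono ⟨le_refl γmin, hgt.le⟩ ⟨hgt.le, le_refl γ⟩ hgt).le
  · -- value at γmin is < 1
    have hb2 : (0:ℝ) < 1 - γmin := by linarith
    have hb3 : (0:ℝ) < 1 + γmin := by linarith
    have hbase : (2 * γmin * d) ^ 2 = (1 - γmin) * (1 + γmin) := by nlinarith
    have h1 : (2 * γmin * d) ^ (2 * γmin) = (1 - γmin) ^ γmin * (1 + γmin) ^ γmin := by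
      have hb1 : (0:ℝ) < 2 * γmin * d := by positivity
      have e0 : (2 * γmin * d) ^ (2 * γmin) = ((2 * γmin * d) ^ (2:ℕ)) ^ γmin := by
        rw [← Real.rpow_natCast_mul hb1.le]
        norm_num
      rw [e0, hbase, Real.mul_rpow hb2.le hb3.le]
    have hval : F γmin = (1 - γmin) / (1 + γmin) := by
      rw [hF, h1]
      have e1 : (1 - γmin) ^ γmin * (1 + γmin) ^ γmin * (1 - γmin) ^ (1 - γmin)
          = (1 - γmin) * (1 + γmin) ^ γmin := by
        rw [show (1 - γmin) ^ γmin * (1 + γmin) ^ γmin * (1 - γmin) ^ (1 - γmin)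
            = ((1 - γmin) ^ γmin * (1 - γmin) ^ (1 - γmin)) * (1 + γmin) ^ γmin by ring,
          ← Real.rpow_add hb2, show γmin + (1 - γmin) = 1 by ring, Real.rpow_one]
      rw [e1, show (1:ℝ) + γmin = γmin + 1 by ring, Real.rpow_add (by linarith : (0:ℝ) < γmin + 1), Real.rpow_one]
      rw [div_eq_div_iff (by positivity) (by positivity)]
      ring
    rw [hval]
    rw [div_lt_one hb3]
    linarith
end

section
/- Let d > 0 be a real constant and γ ∈ (0, 1). Then there exists a constant C > 0 such that for every integer p ≥ 1, (Γ(p − γp + 1)/Γ(p + γp + 1)) · (d^{γp + 1}·Γ(γp + 2))² ≤ C·F(γ)^p, where F(γ) = (2γd)^{2γ}·(1 − γ)^{1 − γ}/(1 + γ)^{1 + γ}. -/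
open Real Filter Topology
open scoped Nat

lemma ulog_diff {x y : ℝ} (hy : 0 < y) (hxy : y ≤ x) :
    x * Real.log x - y * Real.log y ≤ (x - y) * (Real.log x + 1) := by
  have hx : 0 < x := lt_of_lt_of_le hy hxy
  have h1 : Real.log (x / y) ≤ x / y - 1 := Real.log_le_sub_one_of_pos (div_pos hx hy)
  have h2 : Real.log x - Real.log y = Real.log (x / y) := (Real.log_div hx.ne' hy.ne').symm
  have h3 : y * (x / y - 1) = x - y := by field_simp
  calc x * Real.log x - y * Real.log y
      = (x - y) * Real.log x + y * (Real.log x - Real.log y) := by ring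
    _ = (x - y) * Real.log x + y * Real.log (x / y) := by rw [h2]
    _ ≤ (x - y) * Real.log x + y * (x / y - 1) :=
        add_le_add le_rfl (mul_le_mul_of_nonneg_left h1 hy.le)
    _ = (x - y) * (Real.log x + 1) := by rw [h3]; ring

lemma log_mono {x y : ℝ} (hx : 0 < x) (h : x ≤ y) : Real.log x ≤ Real.log y :=
  (Real.log_le_log_iff hx (lt_of_lt_of_le hx h)).mpr h

lemma log_const_1000 : 6 + Real.log 2 ≤ Real.log 1000 := by
  have h6 : Real.exp 6 ≤ 500 := by
    have h := Real.exp_one_lt_d9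
    have : Real.exp 6 = Real.exp 1 ^ (6:ℕ) := by
      rw [← Real.exp_nat_mul]; norm_num
    rw [this]
    nlinarith [Real.exp_pos 1, pow_le_pow_left₀ (Real.exp_pos 1).le h.le 6]
  calc 6 + Real.log 2 = Real.log (Real.exp 6) + Real.log 2 := by rw [Real.log_exp]
    _ = Real.log (Real.exp 6 * 2) := (Real.log_mul (Real.exp_pos 6).ne' two_ne_zero).symm
    _ ≤ Real.log 1000 := log_mono (by positivity) (by nlinarith)

lemma stirling_ge (m : ℕ) (hm : 1 ≤ m) : Real.sqrt π ≤ Stirling.stirlingSeq m := by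
  obtain ⟨k, rfl⟩ := Nat.exists_eq_add_of_le hm
  have h := Stirling.stirlingSeq'_antitone
  have ht : Filter.Tendsto (Stirling.stirlingSeq ∘ Nat.succ) Filter.atTop (𝓝 (Real.sqrt π)) :=
    Stirling.tendsto_stirlingSeq_sqrt_pi.comp (Filter.tendsto_add_atTop_nat 1)
  simpa [Nat.add_comm] using h.le_of_tendsto ht k

lemma fact_lower (m : ℕ) (hm : 1 ≤ m) : ((m : ℝ) / Real.exp 1) ^ m ≤ (m ! : ℝ) := by
  have h1 : Real.sqrt π ≤ Stirling.stirlingSeq m := stirling_ge m hm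
  have h2 : (1:ℝ) ≤ Real.sqrt (2 * m) := by
    rw [show (1:ℝ) = Real.sqrt 1 by simp]
    apply Real.sqrt_le_sqrt
    have : (1:ℝ) ≤ (m:ℝ) := by exact_mod_cast hm
    linarith
  have h3 : (1:ℝ) ≤ Real.sqrt π := by
    rw [show (1:ℝ) = Real.sqrt 1 by simp]
    exact Real.sqrt_le_sqrt (by linarith [Real.pi_gt_three])
  have hpos : (0:ℝ) < ((m : ℝ) / Real.exp 1) ^ m := by positivity
  have hd : (m ! : ℝ) = Stirling.stirlingSeq m * (Real.sqrt (2*m) * ((m:ℝ)/Real.exp 1)^m) := by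
    rw [Stirling.stirlingSeq]
    field_simp
  nlinarith [mul_le_mul_of_nonneg_right h2 hpos.le,
    mul_le_mul_of_nonneg_right (h3.trans h1) (mul_pos (lt_of_lt_of_le one_pos h2) hpos).le]

lemma fact_upper (m : ℕ) (hm : 1 ≤ m) :
    (m ! : ℝ) ≤ Real.exp 1 * m * ((m : ℝ) / Real.exp 1) ^ m := by
  obtain ⟨k, rfl⟩ := Nat.exists_eq_add_of_le hm
  have h : Stirling.stirlingSeq (1 + k) ≤ Stirling.stirlingSeq 1 := by
    simpa [Nat.add_comm] using Stirling.stirlingSeq'_antitone (Nat.zero_le k)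
  rw [Stirling.stirlingSeq_one] at h
  set m := 1 + k with hmdef
  have hm1 : (1:ℝ) ≤ (m:ℝ) := by
    have : 1 ≤ m := by omega
    exact_mod_cast this
  have hd : (m ! : ℝ) = Stirling.stirlingSeq m * (Real.sqrt (2*m) * ((m:ℝ)/Real.exp 1)^m) := by
    rw [Stirling.stirlingSeq]; field_simp
  have hs : Real.sqrt (2 * m) ≤ Real.sqrt 2 * m := by
    rw [Real.sqrt_mul (by norm_num) (m:ℝ)]
    have : Real.sqrt (m:ℝ) ≤ (m:ℝ) := by
      rw [show Real.sqrt (m:ℝ) ≤ (m:ℝ) ↔ (m:ℝ) ≤ (m:ℝ)^2 from Real.sqrt_le_left (by linarith)]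
      nlinarith
    nlinarith [Real.sqrt_nonneg (2:ℝ), Real.sq_sqrt (show (0:ℝ) ≤ 2 by norm_num)]
  have hpos : (0:ℝ) < ((m : ℝ) / Real.exp 1) ^ m := by positivity
  have hsp : (0:ℝ) < Real.sqrt 2 := by positivity
  have key : Stirling.stirlingSeq m * Real.sqrt (2*m) ≤ Real.exp 1 * m := by
    have h4 : Stirling.stirlingSeq m * Real.sqrt (2*m) ≤ (Real.exp 1 / Real.sqrt 2) * (Real.sqrt 2 * m) := by
      apply mul_le_mul h hs (Real.sqrt_nonneg _)
      positivity
    calc Stirling.stirlingSeq m * Real.sqrt (2*m) ≤ (Real.exp 1 / Real.sqrt 2) * (Real.sqrt 2 * m) := h4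
      _ = Real.exp 1 * m := by field_simp
  calc (m ! : ℝ) = Stirling.stirlingSeq m * Real.sqrt (2*m) * ((m:ℝ)/Real.exp 1)^m := by
        rw [hd]; ring
    _ ≤ Real.exp 1 * m * ((m:ℝ)/Real.exp 1)^m := mul_le_mul_of_nonneg_right key hpos.le


lemma core_log (γ P : ℝ) (n : ℕ) (hγ0 : 0 < γ) (hγ1 : γ < 1) (hP : 1 ≤ P)
    (hn1 : 1 ≤ n) (hna : (n:ℝ) ≤ γ*P) (han : γ*P ≤ (n:ℝ) + 1) :
    (P - n) * Real.log (P - n) + (2*(n:ℝ) + 4) * Real.log ((n:ℝ)+2)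
        - (P + n) * Real.log (P + n)
      ≤ Real.log 1000 + 4 * Real.log (P+2) + 2 * Real.log P
        + P * (2*γ*Real.log γ + (1-γ)*Real.log (1-γ) - (1+γ)*Real.log (1+γ)) := by
  set N := (n:ℝ) with hNdef
  have hN1 : 1 ≤ N := by rw [hNdef]; exact_mod_cast hn1
  have hP0 : 0 < P := lt_of_lt_of_le one_pos hP
  have ha0 : 0 < γ*P := mul_pos hγ0 hP0
  have haP : γ*P < P := by
    have := mul_lt_mul_of_pos_right hγ1 hP0
    simpa using this
  have hNP : N < P := lt_of_le_of_lt hna haP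
  have hPa : 0 < P - γ*P := by linarith
  have hlogP : 0 ≤ Real.log P := Real.log_nonneg hP
  have hid : P * (2*γ*Real.log γ + (1-γ)*Real.log (1-γ) - (1+γ)*Real.log (1+γ))
      = (P - γ*P) * Real.log (P - γ*P) + 2*(γ*P)*Real.log (γ*P)
        - (P + γ*P)*Real.log (P + γ*P) := by
    have e1 : Real.log (P - γ*P) = Real.log (1-γ) + Real.log P := by
      rw [show P - γ*P = (1-γ)*P by ring, Real.log_mul (by linarith) hP0.ne']
    have e2 : Real.log (γ*P) = Real.log γ + Real.log P := Real.log_mul hγ0.ne' hP0.ne'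
    have e3 : Real.log (P + γ*P) = Real.log (1+γ) + Real.log P := by
      rw [show P + γ*P = (1+γ)*P by ring, Real.log_mul (by linarith) hP0.ne']
    rw [e1, e2, e3]; ring
  have hB1 : (P - N)*Real.log (P - N) - (P - γ*P)*Real.log (P - γ*P) ≤ Real.log P + 1 := by
    have h := ulog_diff (x := P - N) (y := P - γ*P) hPa (by linarith)
    have hlePN : Real.log (P - N) ≤ Real.log P := log_mono (by linarith) (by linarith)
    have hd1 : (P - N) - (P - γ*P) ≤ 1 := by linarith
    have hd0 : 0 ≤ (P - N) - (P - γ*P) := by linarith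
    rcases le_or_gt (Real.log (P - N) + 1) 0 with hc | hc
    · nlinarith [mul_nonneg hd0 (neg_nonneg.mpr hc)]
    · nlinarith [mul_le_mul_of_nonneg_right hd1 hc.le]
  have hB2 : (2*N+4)*Real.log (N+2) - 2*(γ*P)*Real.log (γ*P) ≤ 4*Real.log (P+2) + 4 := by
    have hlog : Real.log N ≤ Real.log (γ*P) := log_mono (by linarith) hna
    have hlogN : 0 ≤ Real.log N := Real.log_nonneg hN1
    have hmono : N * Real.log N ≤ (γ*P) * Real.log (γ*P) :=
      mul_le_mul hna hlog hlogN (by linarith)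
    have h := ulog_diff (x := N+2) (y := N) (by linarith) (by linarith)
    have hle : Real.log (N+2) ≤ Real.log (P+2) := log_mono (by linarith) (by linarith)
    nlinarith
  have hB3 : (P + γ*P)*Real.log (P + γ*P) - (P + N)*Real.log (P + N)
      ≤ Real.log 2 + Real.log P + 1 := by
    have h := ulog_diff (x := P + γ*P) (y := P + N) (by linarith) (by linarith)
    have hle : Real.log (P + γ*P) ≤ Real.log 2 + Real.log P := by
      rw [← Real.log_mul two_ne_zero hP0.ne']
      exact log_mono (by linarith) (by linarith)
    have h2 : (0:ℝ) ≤ Real.log (P + γ*P) + 1 := by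
      have := Real.log_nonneg (show (1:ℝ) ≤ P + γ*P by linarith)
      linarith
    have hd1 : (P + γ*P) - (P + N) ≤ 1 := by linarith
    have hd0 : 0 ≤ (P + γ*P) - (P + N) := by linarith
    nlinarith [mul_le_mul_of_nonneg_right hd1 h2]
  rw [hid]
  linarith [log_const_1000]

lemma log_scaled (x : ℝ) (m : ℕ) (hx : 0 < x) :
    Real.log (Real.exp 1 * x * (x / Real.exp 1)^m)
      = 1 + Real.log x + m * (Real.log x - 1) := by
  rw [Real.log_mul (by positivity) (by positivity),
    Real.log_mul (Real.exp_pos 1).ne' hx.ne', Real.log_pow,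
    Real.log_div hx.ne' (Real.exp_pos 1).ne', Real.log_exp]

lemma gamma_le_one {x : ℝ} (h1 : 1 ≤ x) (h2 : x ≤ 2) : Real.Gamma x ≤ 1 := by
  have := Real.convexOn_Gamma.le_on_segment (x := 1) (y := 2) (z := x)
    (by norm_num) (by norm_num) ?_
  · simpa [Real.Gamma_one, Real.Gamma_two] using this
  · rw [segment_eq_Icc (by norm_num : (1:ℝ) ≤ 2)]; exact ⟨h1, h2⟩

lemma log_den (x : ℝ) (m : ℕ) (hx : 0 < x) :
    Real.log ((x / Real.exp 1)^m) = m * (Real.log x - 1) := by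
  rw [Real.log_pow, Real.log_div hx.ne' (Real.exp_pos 1).ne', Real.log_exp]




/-- **Exponential-decay Gamma estimate underlying the `p`-convergence bound.**
For `d > 0` and `γ ∈ (0, 1)` there is `C > 0` such that for every integer
`p ≥ 1`,
`(Γ(p − γp + 1)/Γ(p + γp + 1))·(d^{γp+1}·Γ(γp + 2))² ≤ C·F(γ)^p`, where
`F(γ) = (2γd)^{2γ}(1 − γ)^{1 − γ}/(1 + γ)^{1 + γ}`. -/
theorem gamma_exponential_estimate (d : ℝ) (hd : 0 < d)
    (γ : ℝ) (hγ : γ ∈ Set.Ioo (0 : ℝ) 1) (F : ℝ → ℝ)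
    (hF : ∀ γ' : ℝ, F γ' =
      (2 * γ' * d) ^ (2 * γ') * (1 - γ') ^ (1 - γ') / (1 + γ') ^ (1 + γ')) :
    ∃ C > 0, ∀ p : ℕ, 1 ≤ p →
      Real.Gamma ((p : ℝ) - γ * p + 1) / Real.Gamma ((p : ℝ) + γ * p + 1)
          * (d ^ (γ * (p : ℝ) + 1) * Real.Gamma (γ * p + 2)) ^ 2
        ≤ C * F γ ^ p := by
  obtain ⟨hγ0, hγ1⟩ := hγ
  have h1mγ : (0:ℝ) < 1 - γ := by linarith
  have h1pγ : (0:ℝ) < 1 + γ := by linarith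
  -- F positivity and log
  have hFγ := hF γ
  have hF0 : 0 < F γ := by
    rw [hFγ]
    exact div_pos (mul_pos (Real.rpow_pos_of_pos (by positivity) _)
      (Real.rpow_pos_of_pos h1mγ _)) (Real.rpow_pos_of_pos h1pγ _)
  have hlogF : Real.log (F γ)
      = 2*γ*(Real.log 2 + Real.log γ + Real.log d)
        + (1-γ)*Real.log (1-γ) - (1+γ)*Real.log (1+γ) := by
    rw [hFγ, Real.log_div (mul_ne_zero (Real.rpow_pos_of_pos (by positivity) _).ne'
        (Real.rpow_pos_of_pos h1mγ _).ne') (Real.rpow_pos_of_pos h1pγ _).ne',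
      Real.log_mul (Real.rpow_pos_of_pos (by positivity) _).ne'
        (Real.rpow_pos_of_pos h1mγ _).ne',
      Real.log_rpow (by positivity), Real.log_rpow h1mγ, Real.log_rpow h1pγ,
      Real.log_mul (by positivity) hd.ne', Real.log_mul two_ne_zero hγ0.ne']
    try ring
  -- slack geometric bound
  have h2γpos : (0:ℝ) < (2:ℝ) ^ (2*γ) := Real.rpow_pos_of_pos two_pos _
  have hr2 : (1:ℝ) < (2:ℝ) ^ (2*γ) :=
    by rw [Real.one_lt_rpow_iff_of_pos two_pos]; exact Or.inl ⟨one_lt_two, by linarith⟩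
  set r : ℝ := ((2:ℝ) ^ (2*γ))⁻¹ with hrdef
  have hr0 : 0 < r := inv_pos.mpr h2γpos
  have hrlt : r < 1 := by
    rw [hrdef]
    exact inv_lt_one_of_one_lt₀ hr2
  clear_value r
  obtain ⟨C₂, hC₂⟩ : ∃ C₂, ∀ p : ℕ, (p:ℝ)^9 * r^p ≤ C₂ := by
    have hs : Summable (fun p : ℕ => (p:ℝ)^9 * r^p) :=
      summable_pow_mul_geometric_of_norm_lt_one 9
        (by rw [Real.norm_eq_abs, abs_of_pos hr0]; exact hrlt)
    obtain ⟨C₂, hC₂u⟩ := hs.tendsto_atTop_zero.bddAbove_range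
    exact ⟨C₂, fun p => hC₂u (Set.mem_range_self p)⟩
  set Cb : ℝ := 729000 * d^2 * max C₂ 1 with hCbdef
  have hCb0 : 0 < Cb := by positivity
  clear_value Cb
  set N₀ : ℕ := ⌈1/γ⌉₊ with hN₀def
  set M : ℝ := max 1 d with hMdef
  have hM1 : (1:ℝ) ≤ M := le_max_left 1 d
  clear_value N₀ M
  have hminpos : 0 < min (F γ) 1 := lt_min hF0 one_pos
  set Cs : ℝ := 4 * M^4 / (min (F γ) 1 ^ N₀) with hCsdef
  have hCs0 : 0 < Cs := by positivity
  clear_value Cs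
  refine ⟨Cb + Cs, by positivity, fun p hp => ?_⟩
  set P := (p:ℝ) with hPdef
  have hP1 : 1 ≤ P := by rw [hPdef]; exact_mod_cast hp
  have hP0 : 0 < P := lt_of_lt_of_le one_pos hP1
  have ha0 : 0 < γ*P := mul_pos hγ0 hP0
  have haP : γ*P < P := by
    have := mul_lt_mul_of_pos_right hγ1 hP0
    simpa using this
  set n : ℕ := ⌊γ*P⌋₊ with hndef
  set N : ℝ := (n:ℝ) with hNdef
  have hna : N ≤ γ*P := Nat.floor_le ha0.le
  have han : γ*P ≤ N + 1 := (Nat.lt_floor_add_one _).le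
  have hN0 : 0 ≤ N := by rw [hNdef]; positivity
  have hNP : N < P := lt_of_le_of_lt hna haP
  have hnp : n ≤ p := by
    have : (n:ℝ) ≤ (p:ℝ) := le_of_lt hNP
    exact_mod_cast this
  have hFppos : (0:ℝ) < F γ ^ p := pow_pos hF0 p
  clear_value P n N
  -- Gamma positivity
  have hg1pos : 0 < Real.Gamma (P - γ*P + 1) := Real.Gamma_pos_of_pos (by linarith)
  have hg2pos : 0 < Real.Gamma (P + γ*P + 1) := Real.Gamma_pos_of_pos (by linarith)
  have hg3pos : 0 < Real.Gamma (γ*P + 2) := Real.Gamma_pos_of_pos (by linarith)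
  have hdp : 0 < d ^ (γ*P + 1) := Real.rpow_pos_of_pos hd _
  have hmono := Real.Gamma_strictMonoOn_Ici.monotoneOn
  -- Gamma-to-factorial bounds
  have hG1 : Real.Gamma (γ*P + 2) ≤ ((n+2)! : ℝ) := by
    have heq : ((n+2:ℕ):ℝ) + 1 = N + 3 := by rw [hNdef]; push_cast; ring
    have h := hmono (Set.mem_Ici.mpr (by linarith : (2:ℝ) ≤ γ*P+2))
      (Set.mem_Ici.mpr (by linarith : (2:ℝ) ≤ N+3)) (by linarith : γ*P+2 ≤ N+3)
    rwa [show N + 3 = ((n+2:ℕ):ℝ) + 1 from heq.symm, Real.Gamma_nat_eq_factorial] at h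
  have hG2 : ((p+n)! : ℝ) ≤ Real.Gamma (P + γ*P + 1) := by
    have heq : ((p+n:ℕ):ℝ) + 1 = P + N + 1 := by rw [hNdef, hPdef]; push_cast; ring
    have h := hmono (Set.mem_Ici.mpr (by linarith : (2:ℝ) ≤ P+N+1))
      (Set.mem_Ici.mpr (by linarith : (2:ℝ) ≤ P+γ*P+1)) (by linarith : P+N+1 ≤ P+γ*P+1)
    rwa [show P + N + 1 = ((p+n:ℕ):ℝ) + 1 from heq.symm, Real.Gamma_nat_eq_factorial] at h
  have hG3 : Real.Gamma (P - γ*P + 1) ≤ ((p-n)! : ℝ) := by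
    have heq : ((p-n:ℕ):ℝ) + 1 = P - N + 1 := by
      rw [hNdef, hPdef, Nat.cast_sub hnp]
    rcases le_or_gt 2 (P - γ*P + 1) with hc | hc
    · have h := hmono (Set.mem_Ici.mpr hc)
        (Set.mem_Ici.mpr (by linarith : (2:ℝ) ≤ P-N+1)) (by linarith : P-γ*P+1 ≤ P-N+1)
      rwa [show P - N + 1 = ((p-n:ℕ):ℝ) + 1 from heq.symm, Real.Gamma_nat_eq_factorial] at h
    · have h1 : Real.Gamma (P - γ*P + 1) ≤ 1 := gamma_le_one (by linarith) hc.le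
      have h2 : (1:ℝ) ≤ ((p-n)! : ℝ) := by exact_mod_cast (Nat.factorial_pos (p-n))
      linarith
  -- step 1 : to factorials
  have hfac2pos : (0:ℝ) < ((p+n)! : ℝ) := by exact_mod_cast Nat.factorial_pos (p+n)
  have hTX : Real.Gamma (P - γ*P + 1) / Real.Gamma (P + γ*P + 1)
        * (d ^ (γ*P + 1) * Real.Gamma (γ*P + 2)) ^ 2
      ≤ ((p-n)! : ℝ) / ((p+n)! : ℝ) * (d ^ (γ*P + 1) * ((n+2)! : ℝ)) ^ 2 := by
    have hR : Real.Gamma (P - γ*P + 1) / Real.Gamma (P + γ*P + 1)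
        ≤ ((p-n)! : ℝ) / ((p+n)! : ℝ) :=
      div_le_div₀ (by positivity) hG3 hfac2pos hG2
    have hS : (d ^ (γ*P + 1) * Real.Gamma (γ*P + 2)) ^ 2
        ≤ (d ^ (γ*P + 1) * ((n+2)! : ℝ)) ^ 2 := by
      apply pow_le_pow_left₀ (by positivity)
      exact mul_le_mul_of_nonneg_left hG1 hdp.le
    exact mul_le_mul hR hS (by positivity) (by positivity)
  rcases Nat.eq_zero_or_pos n with h0 | h1
  · -- small case : γ * p < 1
    rw [h0] at hTX
    simp only [Nat.sub_zero, Nat.add_zero, Nat.zero_add] at hTX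
    have hfac : ((0+2)! : ℝ) = 2 := by norm_num [Nat.factorial]
    have hlt1 : γ*P < 1 := Nat.floor_eq_zero.mp (hndef.symm.trans h0)
    have hd2 : d ^ (γ*P+1) ≤ M^(2:ℝ) := by
      calc d ^ (γ*P+1) ≤ M ^ (γ*P+1) :=
            Real.rpow_le_rpow hd.le (by rw [hMdef]; exact le_max_right 1 d) (by linarith)
        _ ≤ M ^ (2:ℝ) := Real.rpow_le_rpow_of_exponent_le hM1 (by linarith)
    have hM2 : M ^ (2:ℝ) = M^2 := by
      rw [show (2:ℝ) = ((2:ℕ):ℝ) by norm_num, Real.rpow_natCast]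
    have hbound : Real.Gamma (P - γ*P + 1) / Real.Gamma (P + γ*P + 1)
        * (d ^ (γ*P + 1) * Real.Gamma (γ*P + 2)) ^ 2 ≤ 4 * M^4 := by
      have h2 : ((p)! : ℝ) / ((p)! : ℝ) = 1 := div_self (by positivity)
      have hinner : d ^ (γ*P+1) * ((0+2)! : ℝ) ≤ M^2 * 2 := by
        rw [hfac]
        exact mul_le_mul_of_nonneg_right (hd2.trans_eq hM2) (by norm_num)
      calc Real.Gamma (P - γ*P + 1) / Real.Gamma (P + γ*P + 1)
            * (d ^ (γ*P + 1) * Real.Gamma (γ*P + 2)) ^ 2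
          ≤ ((p)! : ℝ) / ((p)! : ℝ) * (d ^ (γ*P + 1) * ((0+2)! : ℝ)) ^ 2 := hTX
        _ = (d ^ (γ*P + 1) * ((0+2)! : ℝ)) ^ 2 := by rw [h2, one_mul]
        _ ≤ (M^2 * 2)^2 := pow_le_pow_left₀ (by positivity) hinner 2
        _ = 4 * M^4 := by ring
    -- now finish : 4*M^4 = Cs * min (F γ) 1 ^ N₀ ≤ Cs * F γ ^ p
    have hpN₀ : p ≤ N₀ := by
      have hlt : P < 1/γ := (lt_div_iff₀ hγ0).mpr (by linarith)
      have hle : (1:ℝ)/γ ≤ (N₀:ℝ) := by rw [hN₀def]; exact Nat.le_ceil _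
      have : P < (N₀:ℝ) := lt_of_lt_of_le hlt hle
      have := hPdef ▸ this
      exact_mod_cast this.le
    have hmin : min (F γ) 1 ^ N₀ ≤ F γ ^ p := by
      calc min (F γ) 1 ^ N₀ ≤ min (F γ) 1 ^ p :=
            pow_le_pow_of_le_one hminpos.le (min_le_right _ _) hpN₀
        _ ≤ F γ ^ p := pow_le_pow_left₀ hminpos.le (min_le_left _ _) p
    have hCsEq : Cs * (min (F γ) 1 ^ N₀) = 4 * M^4 := by
      rw [hCsdef]; field_simp
    calc Real.Gamma (P - γ*P + 1) / Real.Gamma (P + γ*P + 1)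
          * (d ^ (γ*P + 1) * Real.Gamma (γ*P + 2)) ^ 2
        ≤ 4 * M^4 := hbound
      _ = Cs * (min (F γ) 1 ^ N₀) := hCsEq.symm
      _ ≤ Cs * F γ ^ p := by exact mul_le_mul_of_nonneg_left hmin hCs0.le
      _ ≤ (Cb + Cs) * F γ ^ p :=
          mul_le_mul_of_nonneg_right (le_add_of_nonneg_left hCb0.le) hFppos.le
  · -- main case : 1 ≤ n
    have hn1 : 1 ≤ n := h1
    have hN1 : (1:ℝ) ≤ N := by rw [hNdef]; exact_mod_cast hn1
    have hpn1 : 1 ≤ p - n := by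
      have : n < p := by
        have h' : (n:ℝ) < (p:ℝ) := by rw [← hNdef, ← hPdef]; exact hNP
        exact_mod_cast h'
      omega
    have hc1 : ((p-n:ℕ):ℝ) = P - N := by rw [hNdef, hPdef, Nat.cast_sub hnp]
    have hc2 : ((p+n:ℕ):ℝ) = P + N := by rw [hNdef, hPdef]; push_cast; ring
    have hc3 : ((n+2:ℕ):ℝ) = N + 2 := by rw [hNdef]; push_cast; ring
    have hPN : 0 < P - N := by linarith
    have hnum := fact_upper (p-n) hpn1
    have hden := fact_lower (p+n) (by omega)
    have hfer := fact_upper (n+2) (by omega)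
    rw [hc1] at hnum
    rw [hc2] at hden
    rw [hc3] at hfer
    have hA1pos : 0 < Real.exp 1 * (P-N) * ((P-N)/Real.exp 1)^(p-n) :=
      mul_pos (mul_pos (Real.exp_pos 1) hPN) (pow_pos (div_pos hPN (Real.exp_pos 1)) _)
    have hA2pos : 0 < ((P+N)/Real.exp 1)^(p+n) :=
      pow_pos (div_pos (by linarith) (Real.exp_pos 1)) _
    have hA3ipos : 0 < Real.exp 1 * (N+2) * ((N+2)/Real.exp 1)^(n+2) :=
      mul_pos (mul_pos (Real.exp_pos 1) (by linarith)) (pow_pos (div_pos (by linarith) (Real.exp_pos 1)) _)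
    have hA3pos : 0 < d ^ (γ*P+1) * (Real.exp 1 * (N+2) * ((N+2)/Real.exp 1)^(n+2)) :=
      mul_pos hdp hA3ipos
    have hXY : ((p-n)! : ℝ) / ((p+n)! : ℝ) * (d ^ (γ*P + 1) * ((n+2)! : ℝ)) ^ 2
        ≤ (Real.exp 1 * (P-N) * ((P-N)/Real.exp 1)^(p-n)) / (((P+N)/Real.exp 1)^(p+n))
          * (d ^ (γ*P+1) * (Real.exp 1 * (N+2) * ((N+2)/Real.exp 1)^(n+2))) ^ 2 := by
      have hR : ((p-n)! : ℝ) / ((p+n)! : ℝ)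
          ≤ (Real.exp 1 * (P-N) * ((P-N)/Real.exp 1)^(p-n)) / (((P+N)/Real.exp 1)^(p+n)) :=
        div_le_div₀ hA1pos.le hnum hA2pos hden
      have hS : (d ^ (γ*P + 1) * ((n+2)! : ℝ)) ^ 2
          ≤ (d ^ (γ*P+1) * (Real.exp 1 * (N+2) * ((N+2)/Real.exp 1)^(n+2))) ^ 2 :=
        pow_le_pow_left₀ (by positivity) (mul_le_mul_of_nonneg_left hfer hdp.le) 2
      exact mul_le_mul hR hS (by positivity) (div_nonneg hA1pos.le hA2pos.le)
    have hYpos : 0 < (Real.exp 1 * (P-N) * ((P-N)/Real.exp 1)^(p-n)) / (((P+N)/Real.exp 1)^(p+n))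
          * (d ^ (γ*P+1) * (Real.exp 1 * (N+2) * ((N+2)/Real.exp 1)^(n+2))) ^ 2 :=
      mul_pos (div_pos hA1pos hA2pos) (pow_pos hA3pos 2)
    have hRHSpos : 0 < Cb * F γ ^ p := mul_pos hCb0 hFppos
    have hP2pos : (0:ℝ) < P + 2 := by linarith
    -- star inequality
    have hstar : Real.log 1000 + 6*Real.log (P+2) + 3*Real.log P + 2*Real.log d - 1
        ≤ Real.log Cb + P*(2*γ*Real.log 2) := by
      have h3P : P + 2 ≤ 3*P := by linarith
      have h6 : (P+2)^6 ≤ (3*P)^6 := pow_le_pow_left₀ (by linarith) h3P 6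
      have hP9 : P^9 ≤ max C₂ 1 * ((2:ℝ)^(2*γ))^p := by
        have hv : P^9 * r^p ≤ max C₂ 1 := by
          have := (hC₂ p).trans (le_max_left C₂ 1)
          rw [← hPdef] at this
          exact this
        have hpow : (0:ℝ) < ((2:ℝ)^(2*γ))^p := pow_pos h2γpos p
        have hid : P^9 = P^9 * r^p * ((2:ℝ)^(2*γ))^p := by
          rw [hrdef, inv_pow]
          field_simp
        rw [hid]
        exact mul_le_mul_of_nonneg_right hv hpow.le
      have hm : 1000*(P+2)^6*P^3*d^2 ≤ Cb*((2:ℝ)^(2*γ))^p := by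
        calc 1000*(P+2)^6*P^3*d^2 = (1000*d^2*P^3)*(P+2)^6 := by ring
          _ ≤ (1000*d^2*P^3)*(3*P)^6 :=
              mul_le_mul_of_nonneg_left h6 (by positivity)
          _ = (1000*729*d^2)*P^9 := by ring
          _ ≤ (1000*729*d^2)*(max C₂ 1 * ((2:ℝ)^(2*γ))^p) :=
              mul_le_mul_of_nonneg_left hP9 (by positivity)
          _ = Cb*((2:ℝ)^(2*γ))^p := by rw [hCbdef]; ring
      have hLpos : (0:ℝ) < 1000*(P+2)^6*P^3*d^2 := by
        have := pow_pos hP2pos 6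
        have := pow_pos hP0 3
        positivity
      have hlm := log_mono hLpos hm
      have hmlogL : Real.log (1000*(P+2)^6*P^3*d^2)
          = Real.log 1000 + 6*Real.log (P+2) + 3*Real.log P + 2*Real.log d := by
        rw [Real.log_mul (by positivity) (pow_pos hd 2).ne',
            Real.log_mul (by positivity) (pow_pos hP0 3).ne',
            Real.log_mul (by norm_num) (pow_pos hP2pos 6).ne',
            Real.log_pow, Real.log_pow, Real.log_pow]
        push_cast; ring
      have hmlogR : Real.log (Cb*((2:ℝ)^(2*γ))^p)
          = Real.log Cb + P*(2*γ*Real.log 2) := by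
        rw [Real.log_mul hCb0.ne' (pow_pos h2γpos p).ne', Real.log_pow,
            Real.log_rpow two_pos, ← hPdef]
        try ring
      rw [hmlogL, hmlogR] at hlm
      linarith
    have hna' : (n:ℝ) ≤ γ*P := by rw [← hNdef]; exact hna
    have han' : γ*P ≤ (n:ℝ) + 1 := by rw [← hNdef]; exact han
    have hcore := core_log γ P n hγ0 hγ1 hP1 hn1 hna' han'
    rw [← hNdef] at hcore
    have hlogY : Real.log ((Real.exp 1 * (P-N) * ((P-N)/Real.exp 1)^(p-n)) / (((P+N)/Real.exp 1)^(p+n))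
          * (d ^ (γ*P+1) * (Real.exp 1 * (N+2) * ((N+2)/Real.exp 1)^(n+2))) ^ 2)
        = (1 + Real.log (P-N) + (P-N)*(Real.log (P-N) - 1))
          - (P+N)*(Real.log (P+N) - 1)
          + 2*((γ*P+1)*Real.log d + (1 + Real.log (N+2) + (N+2)*(Real.log (N+2) - 1))) := by
      rw [Real.log_mul (div_pos hA1pos hA2pos).ne' (pow_pos hA3pos 2).ne',
          Real.log_div hA1pos.ne' hA2pos.ne',
          log_scaled (P-N) (p-n) hPN, log_den (P+N) (p+n) (by linarith),
          Real.log_pow,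
          Real.log_mul hdp.ne' hA3ipos.ne', Real.log_rpow hd,
          log_scaled (N+2) (n+2) (by linarith), hc1, hc2, hc3]
      push_cast
      try ring
    have hlogRHS : Real.log (Cb * F γ ^ p) = Real.log Cb + P * Real.log (F γ) := by
      rw [Real.log_mul hCb0.ne' hFppos.ne', Real.log_pow, ← hPdef]
    have hlPN : Real.log (P-N) ≤ Real.log P := log_mono hPN (by linarith)
    have hlN2 : Real.log (N+2) ≤ Real.log (P+2) := log_mono (by linarith) (by linarith)
    have hkey : Real.log ((Real.exp 1 * (P-N) * ((P-N)/Real.exp 1)^(p-n)) / (((P+N)/Real.exp 1)^(p+n))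
          * (d ^ (γ*P+1) * (Real.exp 1 * (N+2) * ((N+2)/Real.exp 1)^(n+2))) ^ 2)
        ≤ Real.log (Cb * F γ ^ p) := by
      rw [hlogY, hlogRHS, hlogF]
      linarith
    have hYC := (Real.log_le_log_iff hYpos hRHSpos).mp hkey
    calc Real.Gamma (P - γ*P + 1) / Real.Gamma (P + γ*P + 1)
          * (d ^ (γ*P + 1) * Real.Gamma (γ*P + 2)) ^ 2
        ≤ ((p-n)! : ℝ) / ((p+n)! : ℝ) * (d ^ (γ*P + 1) * ((n+2)! : ℝ)) ^ 2 := hTX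
      _ ≤ (Real.exp 1 * (P-N) * ((P-N)/Real.exp 1)^(p-n)) / (((P+N)/Real.exp 1)^(p+n))
          * (d ^ (γ*P+1) * (Real.exp 1 * (N+2) * ((N+2)/Real.exp 1)^(n+2))) ^ 2 := hXY
      _ ≤ Cb * F γ ^ p := hYC
      _ ≤ (Cb + Cs) * F γ ^ p :=
          mul_le_mul_of_nonneg_right (le_add_of_nonneg_right hCs0.le) hFppos.le
end

section
/- Let d ≥ 1 and p ≥ 0 be integers, a > 0 a real constant, let B ⊂ ℝ^{d+1} be an open ball (coordinates (t, x₁, …, x_d)), let φ : ℝ^{d+1} → ℝ be a smooth function with compact support contained in the closure of B and with ∫_B φ(y) dy = 1, and let v : ℝ^{d+1} → ℝ be smooth. Define Q^p v(z) = ∑_{α : |α| ≤ p} (1/α!) ∫_B (∂^α v)(y)·(z − y)^α·φ(y) dy (sum over multi-indices α ∈ ℕ^{d+1}). If v satisfies ∂²v/∂t² − a·∑_{i=1}^d ∂²v/∂x_i² = 0 everywhere on ℝ^{d+1}, then the polynomial function Q^p v also satisfies ∂²(Q^p v)/∂t² − a·∑_{i=1}^d ∂²(Q^p v)/∂x_i²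 = 0 everywhere on ℝ^{d+1}. -/
open MeasureTheory

/-- The partial derivative of `f : ℝⁿ → ℝ` in the `i`-th coordinate direction. -/
noncomputable def partialDeriv' {n : ℕ} (i : Fin n)
    (f : (Fin n → ℝ) → ℝ) : (Fin n → ℝ) → ℝ :=
  fun x => deriv (fun s : ℝ => f (Function.update x i s)) (x i)

/-- The iterated partial derivative `∂^α f` associated with a multi-index
`α : Fin n → ℕ` (the `i`-th coordinate derivative is taken `α i` times). -/
noncomputable def multiPartialDeriv {n : ℕ} (α : Fin n → ℕ)
    (f : (Fin n → ℝ) → ℝ) : (Fin n → ℝ) → ℝ :=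
  (List.ofFn (fun i : Fin n => (partialDeriv' i)^[α i])).foldr
    (fun g acc => g ∘ acc) id f

namespace AvgTaylorAux

variable {n : ℕ}

lemma update_eq_add (x : Fin n → ℝ) (i : Fin n) (s : ℝ) :
    Function.update x i s = x + (s - x i) • (Pi.single i 1 : Fin n → ℝ) := by
  funext k
  by_cases h : k = i
  · subst h; simp
  · simp [Function.update_of_ne h, Pi.single_eq_of_ne h]

lemma hasDerivAt_comp_update (f : (Fin n → ℝ) → ℝ) (x : Fin n → ℝ) (i : Fin n)
    (hf : DifferentiableAt ℝ f x) :
    HasDerivAt (fun s => f (Function.update x i s))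
      (fderiv ℝ f x (Pi.single i 1 : Fin n → ℝ)) (x i) := by
  have hg : HasDerivAt (fun s : ℝ => x + (s - x i) • (Pi.single i 1 : Fin n → ℝ))
      (Pi.single i (1:ℝ)) (x i) := by
    simpa using (((hasDerivAt_id (x i)).sub_const (x i)).smul_const
      (Pi.single i 1 : Fin n → ℝ)).const_add x
  have hx : x + ((x i) - x i) • (Pi.single i 1 : Fin n → ℝ) = x := by simp
  have hf' : HasFDerivAt f (fderiv ℝ f x)
      ((fun s : ℝ => x + (s - x i) • (Pi.single i 1 : Fin n → ℝ)) (x i)) := by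
    simpa [hx] using hf.hasFDerivAt
  have := hf'.comp_hasDerivAt (x i) hg
  simp only [← update_eq_add x i] at this
  exact this

lemma partialDeriv'_apply (f : (Fin n → ℝ) → ℝ) (i : Fin n) (x : Fin n → ℝ)
    (hf : DifferentiableAt ℝ f x) :
    partialDeriv' i f x = fderiv ℝ f x (Pi.single i 1 : Fin n → ℝ) :=
  (hasDerivAt_comp_update f x i hf).deriv

lemma partialDeriv'_eq (f : (Fin n → ℝ) → ℝ) (i : Fin n) (hf : Differentiable ℝ f) :
    partialDeriv' i f = fun x => fderiv ℝ f x (Pi.single i 1 : Fin n → ℝ) :=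
  funext fun x => partialDeriv'_apply f i x (hf x)

lemma contDiff_partialDeriv' {f : (Fin n → ℝ) → ℝ} (i : Fin n) (hf : ContDiff ℝ (⊤ : ℕ∞) f) :
    ContDiff ℝ (⊤ : ℕ∞) (partialDeriv' i f) := by
  rw [partialDeriv'_eq f i (hf.differentiable (by simp))]
  exact (hf.fderiv_right (by simp)).clm_apply contDiff_const

lemma partialDeriv'_comm {f : (Fin n → ℝ) → ℝ} (i j : Fin n) (hf : ContDiff ℝ (⊤ : ℕ∞) f) :
    partialDeriv' i (partialDeriv' j f) = partialDeriv' j (partialDeriv' i f) := by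
  have hdf : Differentiable ℝ f := hf.differentiable (by simp)
  have hfd : ContDiff ℝ (⊤ : ℕ∞) (fderiv ℝ f) := hf.fderiv_right (by simp)
  have key : ∀ (k l : Fin n) (x : Fin n → ℝ),
      partialDeriv' k (partialDeriv' l f) x
        = fderiv ℝ (fderiv ℝ f) x (Pi.single k 1 : Fin n → ℝ)
            (Pi.single l 1 : Fin n → ℝ) := by
    intro k l x
    rw [partialDeriv'_eq f l hdf]
    have hdiff : DifferentiableAt ℝ
        (fun y => fderiv ℝ f y (Pi.single l 1 : Fin n → ℝ)) x :=
      ((hfd.clm_apply contDiff_const).differentiable (by simp)) x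
    rw [partialDeriv'_apply _ k x hdiff]
    rw [fderiv_clm_apply ((hfd.differentiable (by simp)) x) (differentiableAt_const _)]
    simp
  funext x
  rw [key i j x, key j i x]
  exact second_derivative_symmetric (fun y => (hdf y).hasFDerivAt)
    ((hfd.differentiable (by simp)) x).hasFDerivAt _ _

/-- `Dl l f` applies the partial derivatives with indices in `l` (rightmost first). -/
noncomputable def Dl (l : List (Fin n)) (f : (Fin n → ℝ) → ℝ) : (Fin n → ℝ) → ℝ :=
  l.foldr (fun i g => partialDeriv' i g) f

@[simp] lemma Dl_nil (f : (Fin n → ℝ) → ℝ) : Dl [] f = f := rfl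
@[simp] lemma Dl_cons (i : Fin n) (l : List (Fin n)) (f : (Fin n → ℝ) → ℝ) :
    Dl (i :: l) f = partialDeriv' i (Dl l f) := rfl

lemma Dl_append (l₁ l₂ : List (Fin n)) (f : (Fin n → ℝ) → ℝ) :
    Dl (l₁ ++ l₂) f = Dl l₁ (Dl l₂ f) := by
  induction l₁ with
  | nil => rfl
  | cons i l ih => simp [ih]

lemma Dl_contDiff (l : List (Fin n)) {f : (Fin n → ℝ) → ℝ} (hf : ContDiff ℝ (⊤ : ℕ∞) f) :
    ContDiff ℝ (⊤ : ℕ∞) (Dl l f) := by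
  induction l with
  | nil => exact hf
  | cons i l ih => exact contDiff_partialDeriv' i ih

lemma Dl_replicate (k : ℕ) (i : Fin n) (f : (Fin n → ℝ) → ℝ) :
    Dl (List.replicate k i) f = (partialDeriv' i)^[k] f := by
  induction k with
  | zero => rfl
  | succ k ih => simp [List.replicate_succ, ih, Function.iterate_succ_apply']

lemma iterate_contDiff (k : ℕ) (i : Fin n) {f : (Fin n → ℝ) → ℝ} (hf : ContDiff ℝ (⊤ : ℕ∞) f) :
    ContDiff ℝ (⊤ : ℕ∞) ((partialDeriv' i)^[k] f) := by
  induction k with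
  | zero => exact hf
  | succ k ih => rw [Function.iterate_succ_apply']; exact contDiff_partialDeriv' i ih

lemma Dl_partialDeriv'_comm (l : List (Fin n)) (j : Fin n) {f : (Fin n → ℝ) → ℝ}
    (hf : ContDiff ℝ (⊤ : ℕ∞) f) :
    Dl l (partialDeriv' j f) = partialDeriv' j (Dl l f) := by
  induction l with
  | nil => rfl
  | cons i l ih =>
    simp only [Dl_cons, ih]
    exact partialDeriv'_comm i j (Dl_contDiff l hf)

/-- The list of indices of a multi-index. -/
def bigList (α : Fin n → ℕ) : List (Fin n) :=
  ((List.finRange n).map (fun i => List.replicate (α i) i)).flatten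

lemma multiPartialDeriv_eq_Dl (α : Fin n → ℕ) (f : (Fin n → ℝ) → ℝ) :
    multiPartialDeriv α f = Dl (bigList α) f := by
  unfold multiPartialDeriv bigList
  rw [List.ofFn_eq_map]
  induction (List.finRange n) with
  | nil => rfl
  | cons i L ih =>
    simp only [List.map_cons, List.foldr_cons, List.flatten_cons, Dl_append, Dl_replicate,
      Function.comp_apply, ih]

lemma Dl_flatten_update (L : List (Fin n)) (α : Fin n → ℕ) (j : Fin n)
    {f : (Fin n → ℝ) → ℝ} (hf : ContDiff ℝ (⊤ : ℕ∞) f) :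
    Dl ((L.map (fun i => List.replicate ((α + (Pi.single j 1 : Fin n → ℕ)) i) i)).flatten) f
      = Dl ((L.map (fun i => List.replicate (α i) i)).flatten)
          ((partialDeriv' j)^[L.count j] f) := by
  induction L with
  | nil => rfl
  | cons i L ih =>
    by_cases h : i = j
    · subst h
      simp only [List.map_cons, List.flatten_cons, Dl_append, ih, List.count_cons_self]
      rw [Dl_replicate, Dl_replicate]
      have hα : (α + (Pi.single i 1 : Fin n → ℕ)) i = α i + 1 := by simp
      rw [hα, Function.iterate_succ_apply, Function.iterate_succ_apply']
      congr 1
      exact (Dl_partialDeriv'_comm _ i (iterate_contDiff _ _ hf)).symm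
    · simp only [List.map_cons, List.flatten_cons, Dl_append, ih]
      have hα : (α + (Pi.single j 1 : Fin n → ℕ)) i = α i := by simp [Pi.single_eq_of_ne h]
      rw [hα, List.count_cons_of_ne h]

lemma multiPartialDeriv_contDiff (α : Fin n → ℕ) {f : (Fin n → ℝ) → ℝ}
    (hf : ContDiff ℝ (⊤ : ℕ∞) f) : ContDiff ℝ (⊤ : ℕ∞) (multiPartialDeriv α f) := by
  rw [multiPartialDeriv_eq_Dl]; exact Dl_contDiff _ hf

lemma multiPartialDeriv_single (α : Fin n → ℕ) (j : Fin n) {f : (Fin n → ℝ) → ℝ}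
    (hf : ContDiff ℝ (⊤ : ℕ∞) f) :
    multiPartialDeriv (α + (Pi.single j 1 : Fin n → ℕ)) f
      = multiPartialDeriv α (partialDeriv' j f) := by
  rw [multiPartialDeriv_eq_Dl, multiPartialDeriv_eq_Dl]
  unfold bigList
  rw [Dl_flatten_update (List.finRange n) α j hf]
  have h1 : (List.finRange n).count j = 1 :=
    List.count_eq_one_of_mem (List.nodup_finRange n) (List.mem_finRange j)
  rw [h1, Function.iterate_one]

lemma partialDeriv'_const_mul_sum {ι : Type*} (s : Finset ι) (g : ι → (Fin n → ℝ) → ℝ)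
    (hg : ∀ i ∈ s, ContDiff ℝ (⊤ : ℕ∞) (g i)) (a : ℝ) (k : Fin n) :
    partialDeriv' k (fun x => a * ∑ i ∈ s, g i x)
      = fun x => a * ∑ i ∈ s, partialDeriv' k (g i) x := by
  funext x
  have h1 : HasDerivAt (fun t => a * ∑ i ∈ s, g i (Function.update x k t))
      (a * ∑ i ∈ s, fderiv ℝ (g i) x (Pi.single k 1 : Fin n → ℝ)) (x k) :=
    (HasDerivAt.fun_sum fun i hi =>
      hasDerivAt_comp_update (g i) x k (((hg i hi).differentiable (by simp)) x)).const_mul a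
  have h2 : partialDeriv' k (fun x => a * ∑ i ∈ s, g i x) x
      = a * ∑ i ∈ s, fderiv ℝ (g i) x (Pi.single k 1 : Fin n → ℝ) := h1.deriv
  rw [h2]
  congr 1
  exact Finset.sum_congr rfl fun i hi =>
    (partialDeriv'_apply (g i) k x (((hg i hi).differentiable (by simp)) x)).symm

lemma Dl_const_mul_sum {ι : Type*} (l : List (Fin n)) (s : Finset ι)
    (g : ι → (Fin n → ℝ) → ℝ) (hg : ∀ i ∈ s, ContDiff ℝ (⊤ : ℕ∞) (g i)) (a : ℝ) :
    Dl l (fun x => a * ∑ i ∈ s, g i x) = fun x => a * ∑ i ∈ s, Dl l (g i) x := by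
  induction l with
  | nil => rfl
  | cons k l ih =>
    show partialDeriv' k (Dl l fun x => a * ∑ i ∈ s, g i x) = _
    rw [ih, partialDeriv'_const_mul_sum s _ (fun i hi => Dl_contDiff l (hg i hi)) a k]
    rfl

lemma multiPartialDeriv_const_mul_sum {ι : Type*} (α : Fin n → ℕ) (s : Finset ι)
    (g : ι → (Fin n → ℝ) → ℝ) (hg : ∀ i ∈ s, ContDiff ℝ (⊤ : ℕ∞) (g i)) (a : ℝ) :
    multiPartialDeriv α (fun x => a * ∑ i ∈ s, g i x)
      = fun x => a * ∑ i ∈ s, multiPartialDeriv α (g i) x := by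
  rw [multiPartialDeriv_eq_Dl, Dl_const_mul_sum _ s g hg a]
  funext x
  simp only [multiPartialDeriv_eq_Dl]

lemma term_hasDerivAt {B : Set (Fin n → ℝ)} (hBm : MeasurableSet B)
    {K : Set (Fin n → ℝ)} (hK : IsCompact K) (hBK : B ⊆ K)
    {φ M : (Fin n → ℝ) → ℝ} (hφ : Continuous φ) (hM : Continuous M)
    (α : Fin n → ℕ) (z : Fin n → ℝ) (j : Fin n) :
    HasDerivAt (fun s => ∫ y in B, M y * (∏ i, (Function.update z j s i - y i) ^ α i) * φ y)
      ((α j : ℝ) * ∫ y in B, M y * ((z j - y j) ^ (α j - 1) *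
          ∏ i ∈ Finset.univ.erase j, (z i - y i) ^ α i) * φ y) (z j) := by
  classical
  set R : (Fin n → ℝ) → ℝ := fun y => ∏ i ∈ Finset.univ.erase j, (z i - y i) ^ α i with hR
  have hRc : Continuous R := by
    apply continuous_finset_prod
    intro i _
    exact (continuous_const.sub (continuous_apply i)).pow _
  set F : ℝ → (Fin n → ℝ) → ℝ := fun s y => M y * ((s - y j) ^ α j * R y) * φ y with hF
  set F' : ℝ → (Fin n → ℝ) → ℝ :=
    fun s y => M y * (((α j : ℝ) * (s - y j) ^ (α j - 1)) * R y) * φ y with hF'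
  have hprod : ∀ (s : ℝ) (y : Fin n → ℝ),
      (∏ i, (Function.update z j s i - y i) ^ α i) = (s - y j) ^ α j * R y := by
    intro s y
    rw [← Finset.mul_prod_erase Finset.univ _ (Finset.mem_univ j)]
    simp only [Function.update_self]
    congr 1
    exact Finset.prod_congr rfl fun i hi => by
      rw [Function.update_of_ne (Finset.mem_erase.1 hi).1]
  have hcontF : ∀ s, Continuous (F s) := by
    intro s
    exact (hM.mul ((continuous_const.sub (continuous_apply j)).pow _ |>.mul hRc)).mul hφ
  have hcontF' : ∀ s, Continuous (F' s) := by
    intro s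
    exact (hM.mul ((continuous_const.mul
      ((continuous_const.sub (continuous_apply j)).pow _)).mul hRc)).mul hφ
  have hh : Continuous (fun q : ℝ × (Fin n → ℝ) => F' q.1 q.2) := by
    have h2 : Continuous (fun q : ℝ × (Fin n → ℝ) => (q.1 - q.2 j)) :=
      continuous_fst.sub ((continuous_apply j).comp continuous_snd)
    exact ((hM.comp continuous_snd).mul
      ((continuous_const.mul (h2.pow _)).mul (hRc.comp continuous_snd))).mul
      (hφ.comp continuous_snd)
  have hKc : IsCompact (Metric.closedBall (z j) 1 ×ˢ K) := (isCompact_closedBall _ _).prod hK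
  obtain ⟨C, hC⟩ := hKc.exists_bound_of_continuousOn hh.continuousOn
  have key := hasDerivAt_integral_of_dominated_loc_of_deriv_le
    (μ := volume.restrict B) (x₀ := z j) (F := F) (F' := F')
    (bound := fun _ => C) (Metric.ball_mem_nhds _ one_pos)
    (Filter.Eventually.of_forall fun s => (hcontF s).aestronglyMeasurable)
    (((hcontF (z j)).continuousOn.integrableOn_compact hK).mono_set hBK)
    ((hcontF' (z j)).aestronglyMeasurable)
    (by
      filter_upwards [self_mem_ae_restrict hBm] with y hy s hs
      exact hC (s, y) ⟨Metric.ball_subset_closedBall hs, hBK hy⟩)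
    (integrableOn_const ((measure_mono hBK).trans_lt hK.measure_lt_top).ne)
    (Filter.Eventually.of_forall fun y => fun s _ => by
      have h1 : HasDerivAt (fun t : ℝ => (t - y j) ^ α j)
          ((α j : ℝ) * (s - y j) ^ (α j - 1)) s := by
        simpa [Function.comp_def] using (hasDerivAt_pow (α j) (s - y j)).comp s
          ((hasDerivAt_id s).sub_const (y j))
      exact ((h1.mul_const (R y)).const_mul (M y)).mul_const (φ y))
  have heq : (fun s => ∫ y in B, M y * (∏ i, (Function.update z j s i - y i) ^ α i) * φ y)
      = fun s => ∫ y in B, F s y := by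
    funext s
    simp only [hprod]
    rfl
  rw [heq]
  have hval : (∫ y in B, F' (z j) y)
      = (α j : ℝ) * ∫ y in B, M y * ((z j - y j) ^ (α j - 1) * R y) * φ y := by
    have hfun : (fun y => F' (z j) y)
        = fun y => (α j : ℝ) * (M y * ((z j - y j) ^ (α j - 1) * R y) * φ y) := by
      funext y; simp only [hF']; ring
    rw [hfun, integral_const_mul]
  exact hval ▸ key.2

end AvgTaylorAux

open AvgTaylorAux in
/-- **The averaged Taylor polynomial preserves solutions of the wave
equation.** In `ℝ^{d+1}` with coordinates `(t, x₁, …, x_d)` (coordinate `0`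
being time), if the smooth function `v` satisfies
`∂²v/∂t² − a·∑ᵢ ∂²v/∂xᵢ² = 0` everywhere, then so does its averaged Taylor
polynomial `Q^p v (z) = ∑_{|α| ≤ p} (1/α!) ∫_B (∂^α v)(y)·(z − y)^α·φ(y) dy`
over the open Euclidean ball `B` with normalized smooth cutoff `φ`. -/
theorem averaged_taylor_preserves_wave_equation
    (d p : ℕ) (hd : 1 ≤ d) (a : ℝ) (ha : 0 < a)
    (B : Set (Fin (d + 1) → ℝ)) (c : Fin (d + 1) → ℝ) (r : ℝ) (hr : 0 < r)
    (hB : B = {x : Fin (d + 1) → ℝ | ∑ i, (x i - c i) ^ 2 < r ^ 2})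
    (φ : (Fin (d + 1) → ℝ) → ℝ) (hφ : ContDiff ℝ (⊤ : ℕ∞) φ)
    (hφsupp : tsupport φ ⊆ closure B)
    (hφint : (∫ y in B, φ y) = 1)
    (v : (Fin (d + 1) → ℝ) → ℝ) (hv : ContDiff ℝ (⊤ : ℕ∞) v)
    (hwave : ∀ z : Fin (d + 1) → ℝ,
      partialDeriv' 0 (partialDeriv' 0 v) z
        - a * ∑ i : Fin d,
            partialDeriv' i.succ (partialDeriv' i.succ v) z = 0)
    (Q : ℕ → ((Fin (d + 1) → ℝ) → ℝ) → (Fin (d + 1) → ℝ) → ℝ)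
    (hQ : ∀ (q : ℕ) (w : (Fin (d + 1) → ℝ) → ℝ) (z : Fin (d + 1) → ℝ),
      Q q w z = ∑ α ∈ (Finset.Iic (fun _ : Fin (d + 1) => q)).filter
          (fun α : Fin (d + 1) → ℕ => ∑ i, α i ≤ q),
        (∏ i, ((α i).factorial : ℝ))⁻¹ *
          ∫ y in B, multiPartialDeriv α w y * (∏ i, (z i - y i) ^ α i) * φ y) :
    ∀ z : Fin (d + 1) → ℝ,
      partialDeriv' 0 (partialDeriv' 0 (Q p v)) z
        - a * ∑ i : Fin d,
            partialDeriv' i.succ (partialDeriv' i.succ (Q p v)) z = 0 := by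
  classical
  have hφc : Continuous φ := hφ.continuous
  -- basic facts about `B`
  have hBopen : IsOpen B := by
    rw [hB]
    exact isOpen_lt (by continuity) continuous_const
  have hBm : MeasurableSet B := hBopen.measurableSet
  have hBK : B ⊆ Metric.closedBall c r := by
    intro x hx
    rw [hB] at hx
    rw [Metric.mem_closedBall, dist_pi_le_iff hr.le]
    intro i
    have h1 : (x i - c i) ^ 2 < r ^ 2 := by
      refine lt_of_le_of_lt ?_ hx
      exact Finset.single_le_sum (fun k _ => sq_nonneg (x k - c k)) (Finset.mem_univ i)
    rw [Real.dist_eq]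
    nlinarith [sq_abs (x i - c i), abs_nonneg (x i - c i)]
  have hK : IsCompact (Metric.closedBall c r) := isCompact_closedBall c r
  -- index-set membership
  have hmem : ∀ (q : ℕ) (α : Fin (d + 1) → ℕ),
      α ∈ (Finset.Iic (fun _ : Fin (d + 1) => q)).filter
        (fun α : Fin (d + 1) → ℕ => ∑ i, α i ≤ q) ↔ ∑ i, α i ≤ q := by
    intro q α
    simp only [Finset.mem_filter, Finset.mem_Iic, and_iff_right_iff_imp]
    intro h
    intro i
    exact le_trans (Finset.single_le_sum (fun k _ => Nat.zero_le (α k))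
      (Finset.mem_univ i)) h
  -- `Q 0 w` is constant, so its partial derivatives vanish
  have key0 : ∀ (w : (Fin (d + 1) → ℝ) → ℝ) (j : Fin (d + 1)) (z : Fin (d + 1) → ℝ),
      partialDeriv' j (Q 0 w) z = 0 := by
    intro w j z
    have hconst : ∀ x : Fin (d + 1) → ℝ, Q 0 w x
        = ∑ α ∈ (Finset.Iic (fun _ : Fin (d + 1) => 0)).filter
            (fun α : Fin (d + 1) → ℕ => ∑ i, α i ≤ 0),
          (∏ i, ((α i).factorial : ℝ))⁻¹ *
            ∫ y in B, multiPartialDeriv α w y * φ y := by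
      intro x
      rw [hQ]
      refine Finset.sum_congr rfl fun α hα => ?_
      have h0 : ∀ i, α i = 0 := by
        have := (hmem 0 α).1 hα
        intro i
        have := Finset.single_le_sum (fun k _ => Nat.zero_le (α k)) (Finset.mem_univ i)
        omega
      congr 1
      refine congrArg _ (funext fun y => ?_)
      have : (∏ i, (x i - y i) ^ α i) = 1 :=
        Finset.prod_eq_one fun i _ => by rw [h0 i, pow_zero]
      rw [this, mul_one]
    show deriv (fun s => Q 0 w (Function.update z j s)) (z j) = 0
    have hfun : (fun s => Q 0 w (Function.update z j s))
        = fun _ => ∑ α ∈ (Finset.Iic (fun _ : Fin (d + 1) => 0)).filter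
            (fun α : Fin (d + 1) → ℕ => ∑ i, α i ≤ 0),
          (∏ i, ((α i).factorial : ℝ))⁻¹ *
            ∫ y in B, multiPartialDeriv α w y * φ y := funext fun s => hconst _
    rw [hfun, deriv_const]
  -- the key derivative formula : ∂ⱼ (Q (q+1) w) = Q q (∂ⱼ w)
  have key : ∀ (q : ℕ) (w : (Fin (d + 1) → ℝ) → ℝ), ContDiff ℝ (⊤ : ℕ∞) w →
      ∀ (j : Fin (d + 1)) (z : Fin (d + 1) → ℝ),
      partialDeriv' j (Q (q + 1) w) z = Q q (partialDeriv' j w) z := by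
    intro q w hw j z
    have hMc : ∀ α : Fin (d + 1) → ℕ, Continuous (multiPartialDeriv α w) :=
      fun α => (multiPartialDeriv_contDiff α hw).continuous
    have hfun : (fun s => Q (q + 1) w (Function.update z j s))
        = fun s => ∑ α ∈ (Finset.Iic (fun _ : Fin (d + 1) => q + 1)).filter
            (fun α : Fin (d + 1) → ℕ => ∑ i, α i ≤ q + 1),
          (∏ i, ((α i).factorial : ℝ))⁻¹ *
            ∫ y in B, multiPartialDeriv α w y *
              (∏ i, (Function.update z j s i - y i) ^ α i) * φ y :=
      funext fun s => hQ _ _ _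
    have hder : HasDerivAt (fun s => Q (q + 1) w (Function.update z j s))
        (∑ α ∈ (Finset.Iic (fun _ : Fin (d + 1) => q + 1)).filter
            (fun α : Fin (d + 1) → ℕ => ∑ i, α i ≤ q + 1),
          (∏ i, ((α i).factorial : ℝ))⁻¹ *
            ((α j : ℝ) * ∫ y in B, multiPartialDeriv α w y *
              ((z j - y j) ^ (α j - 1) *
                ∏ i ∈ Finset.univ.erase j, (z i - y i) ^ α i) * φ y)) (z j) := by
      rw [hfun]
      exact HasDerivAt.fun_sum fun α _ =>
        (term_hasDerivAt hBm hK hBK hφc (hMc α) α z j).const_mul _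
    have hLHS : partialDeriv' j (Q (q + 1) w) z
        = ∑ α ∈ (Finset.Iic (fun _ : Fin (d + 1) => q + 1)).filter
            (fun α : Fin (d + 1) → ℕ => ∑ i, α i ≤ q + 1),
          (∏ i, ((α i).factorial : ℝ))⁻¹ *
            ((α j : ℝ) * ∫ y in B, multiPartialDeriv α w y *
              ((z j - y j) ^ (α j - 1) *
                ∏ i ∈ Finset.univ.erase j, (z i - y i) ^ α i) * φ y) := hder.deriv
    rw [hLHS, hQ q (partialDeriv' j w) z]
    -- now reindex the sum
    rw [← Finset.sum_filter_of_ne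
      (p := fun α : Fin (d + 1) → ℕ => α j ≠ 0)
      (fun α _ hfα => by
        intro hαj
        exact hfα (by simp [hαj]))]
    refine Finset.sum_bij' (i := fun α _ => Function.update α j (α j - 1))
      (j := fun β _ => Function.update β j (β j + 1)) ?_ ?_ ?_ ?_ ?_
    · -- maps into target
      intro α hα
      rw [Finset.mem_filter] at hα
      obtain ⟨hα1, hα2⟩ := hα
      have hs : ∑ i, α i ≤ q + 1 := (hmem _ _).1 hα1
      rw [hmem]
      rw [Finset.sum_update_of_mem (Finset.mem_univ j), Finset.sdiff_singleton_eq_erase]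
      have h1 : α j + ∑ i ∈ Finset.univ.erase j, α i = ∑ i, α i :=
        Finset.add_sum_erase _ _ (Finset.mem_univ j)
      have h2 : α j ≠ 0 := hα2
      omega
    · -- inverse maps into source
      intro β hβ
      have hs : ∑ i, β i ≤ q := (hmem _ _).1 hβ
      rw [Finset.mem_filter]
      constructor
      · rw [hmem]
        rw [Finset.sum_update_of_mem (Finset.mem_univ j), Finset.sdiff_singleton_eq_erase]
        have h1 : β j + ∑ i ∈ Finset.univ.erase j, β i = ∑ i, β i :=
          Finset.add_sum_erase _ _ (Finset.mem_univ j)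
        omega
      · simp
    · -- left inverse
      intro α hα
      rw [Finset.mem_filter] at hα
      have h2 : α j ≠ 0 := hα.2
      simp only [Function.update_self, Function.update_idem]
      rw [Nat.sub_add_cancel (Nat.one_le_iff_ne_zero.2 h2), Function.update_eq_self]
    · -- right inverse
      intro β _
      simp only [Function.update_self, Function.update_idem]
      rw [Nat.add_sub_cancel, Function.update_eq_self]
    · -- terms agree
      intro α hα
      rw [Finset.mem_filter] at hα
      have hαj : α j ≠ 0 := hα.2
      set β := Function.update α j (α j - 1) with hβdef
      have hβα : β + (Pi.single j 1 : Fin (d + 1) → ℕ) = α := by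
        funext i
        by_cases h : i = j
        · subst h
          simp only [Pi.add_apply, hβdef, Function.update_self, Pi.single_eq_same]
          omega
        · simp [hβdef, Function.update_of_ne h, Pi.single_eq_of_ne h]
      -- integrand equality
      have hM : multiPartialDeriv β (partialDeriv' j w) = multiPartialDeriv α w := by
        rw [← multiPartialDeriv_single β j hw, hβα]
      have hprod : ∀ y : Fin (d + 1) → ℝ,
          (∏ i, (z i - y i) ^ β i)
            = (z j - y j) ^ (α j - 1) * ∏ i ∈ Finset.univ.erase j, (z i - y i) ^ α i := by
        intro y
        rw [← Finset.mul_prod_erase Finset.univ (fun i => (z i - y i) ^ β i)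
          (Finset.mem_univ j)]
        congr 1
        · simp [hβdef]
        · exact Finset.prod_congr rfl fun i hi => by
            rw [hβdef, Function.update_of_ne (Finset.mem_erase.1 hi).1]
      have hint : (∫ y in B, multiPartialDeriv β (partialDeriv' j w) y *
            (∏ i, (z i - y i) ^ β i) * φ y)
          = ∫ y in B, multiPartialDeriv α w y *
            ((z j - y j) ^ (α j - 1) *
              ∏ i ∈ Finset.univ.erase j, (z i - y i) ^ α i) * φ y := by
        refine congrArg _ (funext fun y => ?_)
        rw [hM, hprod y]
      -- factorial identity
      have hfact : (∏ i, ((α i).factorial : ℝ))⁻¹ * (α j : ℝ)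
          = (∏ i, ((β i).factorial : ℝ))⁻¹ := by
        have h1 : (∏ i, ((α i).factorial : ℝ))
            = ((α j).factorial : ℝ) * ∏ i ∈ Finset.univ.erase j, ((α i).factorial : ℝ) :=
          (Finset.mul_prod_erase Finset.univ _ (Finset.mem_univ j)).symm
        have h2 : (∏ i, ((β i).factorial : ℝ))
            = (((α j - 1)).factorial : ℝ) * ∏ i ∈ Finset.univ.erase j, ((α i).factorial : ℝ) := by
          rw [← Finset.mul_prod_erase Finset.univ _ (Finset.mem_univ j)]
          congr 1
          · simp [hβdef]
          · exact Finset.prod_congr rfl fun i hi => by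
              rw [hβdef, Function.update_of_ne (Finset.mem_erase.1 hi).1]
        have h3 : ((α j).factorial : ℝ) = (α j : ℝ) * ((α j - 1).factorial : ℝ) := by
          rw [← Nat.cast_mul, Nat.mul_factorial_pred hαj]
        have hαj0 : (α j : ℝ) ≠ 0 := Nat.cast_ne_zero.2 hαj
        have hf1 : (((α j - 1)).factorial : ℝ) ≠ 0 :=
          Nat.cast_ne_zero.2 (Nat.factorial_ne_zero _)
        have hf2 : (∏ i ∈ Finset.univ.erase j, ((α i).factorial : ℝ)) ≠ 0 :=
          Finset.prod_ne_zero_iff.2 fun i _ => Nat.cast_ne_zero.2 (Nat.factorial_ne_zero _)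
        rw [h1, h2, h3]
        field_simp
      calc (∏ i, ((α i).factorial : ℝ))⁻¹ *
            ((α j : ℝ) * ∫ y in B, multiPartialDeriv α w y *
              ((z j - y j) ^ (α j - 1) *
                ∏ i ∈ Finset.univ.erase j, (z i - y i) ^ α i) * φ y)
          = ((∏ i, ((α i).factorial : ℝ))⁻¹ * (α j : ℝ)) *
            ∫ y in B, multiPartialDeriv α w y *
              ((z j - y j) ^ (α j - 1) *
                ∏ i ∈ Finset.univ.erase j, (z i - y i) ^ α i) * φ y := by ring
        _ = (∏ i, ((β i).factorial : ℝ))⁻¹ *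
            ∫ y in B, multiPartialDeriv β (partialDeriv' j w) y *
              (∏ i, (z i - y i) ^ β i) * φ y := by rw [hfact, hint]
  -- smoothness bookkeeping
  have hsm1 : ∀ j : Fin (d + 1), ContDiff ℝ (⊤ : ℕ∞) (partialDeriv' j v) :=
    fun j => contDiff_partialDeriv' j hv
  have hsm2 : ∀ j : Fin (d + 1), ContDiff ℝ (⊤ : ℕ∞) (partialDeriv' j (partialDeriv' j v)) :=
    fun j => contDiff_partialDeriv' j (hsm1 j)
  intro z
  -- case split on p
  have hcases : p = 0 ∨ p = 1 ∨ ∃ q, p = q + 2 := by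
    rcases p with _ | _ | q
    · exact Or.inl rfl
    · exact Or.inr (Or.inl rfl)
    · exact Or.inr (Or.inr ⟨q, rfl⟩)
  rcases hcases with hp | hp | ⟨q, hp⟩
  · subst hp
    have h2 : ∀ j : Fin (d + 1), partialDeriv' j (partialDeriv' j (Q 0 v)) z = 0 := by
      intro j
      have h1 : partialDeriv' j (Q 0 v) = fun _ => (0 : ℝ) :=
        funext fun z' => key0 v j z'
      rw [h1]
      show deriv (fun _ => (0:ℝ)) (z j) = 0
      simp
    rw [h2 0, Finset.sum_eq_zero fun i _ => h2 i.succ]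
    simp
  · subst hp
    have h2 : ∀ j : Fin (d + 1), partialDeriv' j (partialDeriv' j (Q 1 v)) z = 0 := by
      intro j
      have h1 : partialDeriv' j (Q 1 v) = Q 0 (partialDeriv' j v) :=
        funext fun z' => key 0 v hv j z'
      rw [h1]
      exact key0 _ j z
    rw [h2 0, Finset.sum_eq_zero fun i _ => h2 i.succ]
    simp
  · subst hp
    have h2 : ∀ j : Fin (d + 1), partialDeriv' j (partialDeriv' j (Q (q + 2) v)) z
        = Q q (partialDeriv' j (partialDeriv' j v)) z := by
      intro j
      have h1 : partialDeriv' j (Q (q + 2) v) = Q (q + 1) (partialDeriv' j v) :=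
        funext fun z' => key (q + 1) v hv j z'
      rw [h1]
      exact key q _ (hsm1 j) j z
    rw [h2 0, Finset.sum_congr rfl fun i _ => h2 i.succ]
    -- combination step
    have hw0 : partialDeriv' 0 (partialDeriv' 0 v)
        = fun x => a * ∑ i : Fin d, partialDeriv' i.succ (partialDeriv' i.succ v) x :=
      funext fun x => by have := hwave x; linarith
    have hIntOn : ∀ g : (Fin (d + 1) → ℝ) → ℝ, Continuous g →
        Integrable g (volume.restrict B) :=
      fun g hg => ((hg.continuousOn.integrableOn_compact hK).mono_set hBK)
    have hQcombo : Q q (partialDeriv' 0 (partialDeriv' 0 v)) z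
        = a * ∑ i : Fin d, Q q (partialDeriv' i.succ (partialDeriv' i.succ v)) z := by
      rw [hw0, hQ]
      have hsum : ∀ α ∈ (Finset.Iic (fun _ : Fin (d + 1) => q)).filter
          (fun α : Fin (d + 1) → ℕ => ∑ i, α i ≤ q),
          (∏ i, ((α i).factorial : ℝ))⁻¹ *
            ∫ y in B, multiPartialDeriv α
              (fun x => a * ∑ i : Fin d,
                partialDeriv' i.succ (partialDeriv' i.succ v) x) y *
              (∏ i, (z i - y i) ^ α i) * φ y
          = a * ∑ k : Fin d, (∏ i, ((α i).factorial : ℝ))⁻¹ *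
              ∫ y in B, multiPartialDeriv α
                (partialDeriv' k.succ (partialDeriv' k.succ v)) y *
                (∏ i, (z i - y i) ^ α i) * φ y := by
        intro α _
        have hrw := multiPartialDeriv_const_mul_sum α Finset.univ
          (fun i : Fin d => partialDeriv' i.succ (partialDeriv' i.succ v))
          (fun i _ => hsm2 i.succ) a
        simp only [hrw]
        have hfun2 : (fun y => (a * ∑ i : Fin d,
              multiPartialDeriv α (partialDeriv' i.succ (partialDeriv' i.succ v)) y) *
              (∏ i, (z i - y i) ^ α i) * φ y)
            = fun y => a * ∑ k : Fin d,
              multiPartialDeriv α (partialDeriv' k.succ (partialDeriv' k.succ v)) y *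
                (∏ i, (z i - y i) ^ α i) * φ y := by
          funext y
          rw [Finset.mul_sum, Finset.mul_sum]
          rw [Finset.sum_mul, Finset.sum_mul]
          exact Finset.sum_congr rfl fun k _ => by ring
        rw [show (∫ y in B, (a * ∑ i : Fin d,
              multiPartialDeriv α (partialDeriv' i.succ (partialDeriv' i.succ v)) y) *
              (∏ i, (z i - y i) ^ α i) * φ y)
            = ∫ y in B, a * ∑ k : Fin d,
              multiPartialDeriv α (partialDeriv' k.succ (partialDeriv' k.succ v)) y *
                (∏ i, (z i - y i) ^ α i) * φ y from congrArg _ hfun2]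
        rw [integral_const_mul]
        rw [integral_finset_sum _ (fun k _ => hIntOn _
          (((multiPartialDeriv_contDiff α (hsm2 k.succ)).continuous.mul
            (continuous_finset_prod _ fun i _ =>
              (continuous_const.sub (continuous_apply i)).pow _)).mul hφc))]
        rw [← Finset.mul_sum]
        ring
      rw [Finset.sum_congr rfl hsum]
      rw [← Finset.mul_sum, Finset.sum_comm]
      congr 1
      exact Finset.sum_congr rfl fun k _ => (hQ q _ z).symm
    rw [hQcombo]
    ring
end
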